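/- arXiv:2103.04604 — 8 statements merged into one kernel-verified Lean document; each statement's English description precedes it below -/
import Mathlib

section
/- Let $q>2$ be a real number and let $\mathbf{Z}$ be a real-valued random variable with $\mathbb{E}[\mathbf{Z}]=0$, $\mathbb{E}[\mathbf{Z}^2]=1$, and $\mathbb{E}[|\mathbf{Z}|^q]\le\sigma^{2-q}$ for some $\sigma\in(0,1]$. Let $\chi^{1/2}$ be a uniform $\pm1$ random variable. Then for all reals $e,d$ and all $\rho\in(0,\frac{1}{2q})$ we have $\mathbb{E}[|e+\rho d\mathbf{Z}|^q]\le \mathbb{E}[|e+d\chi^{1/2}|^q]+\sigma^{2-q}|d|^q$. -/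
/-!
Second-order Taylor expansion of `|·|^q` at `e` gives, with `v = ρ d z`,
`|e + v|^q ≤ |e|^q + q |e|^(q-2) e v + q(q-1)/2 (|e| + |v|)^(q-2) v²`.
If `|e| ≤ q |v|` the remainder is at most `|d z|^q`, because `(q+1)ρ ≤ 1` and `q(q-1)ρ² ≤ 1`.
Otherwise `|e| + |v| ≤ (1 + 1/q)|e|` and `(1 + 1/q)^(q-2) ≤ exp 1 < 3`, so the remainder is at
most `q(q-1)/4 |e|^(q-2) d² z²`. Since `|e + sd|^(q-2) + |e - sd|^(q-2) ≥ |e|^(q-2)`, the second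
derivative of `s ↦ |e + sd|^q + |e - sd|^q` is at least `q(q-1)|e|^(q-2)d²`, which bounds this by
`((|e+d|^q + |e-d|^q)/2 - |e|^q) z²`. Taking expectations, `𝔼 Z = 0` kills the linear term,
`𝔼 Z² = 1` turns the quadratic one into the Rademacher average, and `𝔼 |Z|^q ≤ σ^(2-q)`.
-/

open MeasureTheory Set Filter Topology Asymptotics

theorem hasDerivAt_abs_rpow_mul_self {r : ℝ} (hr : 0 < r) (x : ℝ) :
    HasDerivAt (fun t : ℝ => |t| ^ r * t) ((r + 1) * |x| ^ r) x := by
  rcases eq_or_ne x 0 with rfl | hx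
  · have hsmall : (fun t : ℝ => |t| ^ r) =o[𝓝 0] (fun _ => (1 : ℝ)) := by
      refine (isLittleO_const_iff one_ne_zero).mpr ?_
      simpa [Real.zero_rpow hr.ne'] using
        (continuous_abs.continuousAt (x := (0:ℝ))).rpow_const (Or.inr hr.le) |>.tendsto
    refine .of_isLittleO ?_
    simpa [Real.zero_rpow hr.ne'] using hsmall.mul_isBigO (isBigO_refl (fun t : ℝ => t) _)
  · have h : HasDerivAt (fun t : ℝ => |t| ^ r * t)
        ((SignType.sign x : ℝ) * r * |x| ^ (r - 1) * x + |x| ^ r * 1) x :=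
      ((hasDerivAt_abs hx).rpow_const (Or.inl (abs_ne_zero.mpr hx))).mul (hasDerivAt_id x)
    have hpow : |x| ^ (r - 1) * |x| = |x| ^ r := by
      rw [← Real.rpow_add_one (abs_ne_zero.mpr hx)]; ring_nf
    convert h using 1
    linear_combination (-r) * hpow - r * |x| ^ (r - 1) * sign_mul_self x

theorem hasDerivAt_add_mul_const (u v s : ℝ) : HasDerivAt (fun s => u + s * v) v s := by
  simpa using ((hasDerivAt_id' s).mul_const v).const_add u

theorem hasDerivAt_abs_rpow_comp_affine {q : ℝ} (hq : 1 < q) (u v s : ℝ) :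
    HasDerivAt (fun s => |u + s * v| ^ q) (q * |u + s * v| ^ (q - 2) * (u + s * v) * v) s :=
  (hasDerivAt_abs_rpow _ hq).comp s (hasDerivAt_add_mul_const u v s)

theorem hasDerivAt_deriv_abs_rpow_comp_affine {q : ℝ} (hq : 2 < q) (u v s : ℝ) :
    HasDerivAt (fun s => q * |u + s * v| ^ (q - 2) * (u + s * v) * v)
      (q * (q - 1) * |u + s * v| ^ (q - 2) * v ^ 2) s := by
  have h := (((hasDerivAt_abs_rpow_mul_self (sub_pos.mpr hq) _).comp s
    (hasDerivAt_add_mul_const u v s)).const_mul q).mul_const v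
  refine (h.congr_deriv (by ring)).congr_of_eventuallyEq (Eventually.of_forall fun t => ?_)
  simp only [Function.comp]; ring

theorem image_one_le_of_deriv2_le {g g' g'' : ℝ → ℝ} {M : ℝ}
    (hg : ∀ s ∈ Icc (0 : ℝ) 1, HasDerivAt g (g' s) s)
    (hg' : ∀ s ∈ Icc (0 : ℝ) 1, HasDerivAt g' (g'' s) s)
    (hM : ∀ s ∈ Icc (0 : ℝ) 1, g'' s ≤ M) :
    g 1 ≤ g 0 + g' 0 + M / 2 := by
  have hIco : Ico (0 : ℝ) 1 ⊆ Icc 0 1 := Ico_subset_Icc_self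
  have hslope : ∀ s ∈ Icc (0 : ℝ) 1, g' s ≤ g' 0 + M * s :=
    image_le_of_deriv_right_le_deriv_boundary
      (fun s hs => (hg' s hs).continuousAt.continuousWithinAt)
      (fun s hs => (hg' s (hIco hs)).hasDerivWithinAt) (by simp) (by fun_prop)
      (fun s _ => by
        simpa using (((hasDerivAt_id s).const_mul M).const_add (g' 0)).hasDerivWithinAt)
      (fun s hs => hM s (hIco hs))
  have hquad : ∀ s, HasDerivAt (fun s => g 0 + g' 0 * s + M / 2 * s ^ 2) (g' 0 + M * s) s := by
    intro s
    have h := (((hasDerivAt_id' s).const_mul (g' 0)).const_add (g 0)).add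
      ((hasDerivAt_pow 2 s).const_mul (M / 2))
    exact h.congr_deriv (by norm_num; ring)
  simpa using image_le_of_deriv_right_le_deriv_boundary
    (fun s hs => (hg s hs).continuousAt.continuousWithinAt)
    (fun s hs => (hg s (hIco hs)).hasDerivWithinAt) (by simp)
    (fun s _ => (hquad s).continuousAt.continuousWithinAt) (fun s _ => (hquad s).hasDerivWithinAt)
    (fun s hs => hslope s (hIco hs)) (right_mem_Icc.mpr zero_le_one)

theorem abs_add_rpow_le {q : ℝ} (hq : 2 < q) (u v : ℝ) :
    |u + v| ^ q ≤ |u| ^ q + q * |u| ^ (q - 2) * u * v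
      + q * (q - 1) / 2 * (|u| + |v|) ^ (q - 2) * v ^ 2 := by
  have h := image_one_le_of_deriv2_le (M := q * (q - 1) * (|u| + |v|) ^ (q - 2) * v ^ 2)
    (fun s _ => hasDerivAt_abs_rpow_comp_affine (by linarith) u v s)
    (fun s _ => hasDerivAt_deriv_abs_rpow_comp_affine hq u v s) fun s hs => ?_
  · simp only [one_mul, zero_mul, add_zero] at h
    linarith
  · have hle : |u + s * v| ≤ |u| + |v| := by
      calc |u + s * v| ≤ |u| + |s| * |v| := by simpa [abs_mul] using abs_add_le u (s * v)
        _ ≤ |u| + |v| := by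
          gcongr
          exact mul_le_of_le_one_left (abs_nonneg v) (abs_le.mpr ⟨by linarith [hs.1], hs.2⟩)
    have hq1 : 0 ≤ q * (q - 1) := by nlinarith
    gcongr

theorem abs_rpow_le_abs_add_rpow_add_abs_sub_rpow {r : ℝ} (hr : 0 ≤ r) (e h : ℝ) :
    |e| ^ r ≤ |e + h| ^ r + |e - h| ^ r := by
  have hmax : |e| ≤ max |e + h| |e - h| := by
    have := abs_add_le (e + h) (e - h)
    rw [show e + h + (e - h) = 2 * e by ring, abs_mul, abs_two] at this
    cases le_total |e + h| |e - h| <;> simp_all <;> linarith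
  calc |e| ^ r ≤ max |e + h| |e - h| ^ r := by gcongr
    _ ≤ |e + h| ^ r + |e - h| ^ r := by
      rcases max_cases |e + h| |e - h| with ⟨hm, _⟩ | ⟨hm, _⟩ <;> rw [hm] <;>
        linarith [Real.rpow_nonneg (abs_nonneg (e + h)) r, Real.rpow_nonneg (abs_nonneg (e - h)) r]

theorem abs_rpow_second_diff_ge {q : ℝ} (hq : 2 < q) (e d : ℝ) :
    q * (q - 1) / 4 * |e| ^ (q - 2) * d ^ 2 ≤ (|e + d| ^ q + |e - d| ^ q) / 2 - |e| ^ q := by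
  have h := image_one_le_of_deriv2_le
    (g := fun s => -(|e + s * d| ^ q + |e + s * -d| ^ q))
    (g' := fun s => -(q * |e + s * d| ^ (q - 2) * (e + s * d) * d
      + q * |e + s * -d| ^ (q - 2) * (e + s * -d) * -d))
    (g'' := fun s => -(q * (q - 1) * |e + s * d| ^ (q - 2) * d ^ 2
      + q * (q - 1) * |e + s * -d| ^ (q - 2) * (-d) ^ 2))
    (M := -(q * (q - 1) * |e| ^ (q - 2) * d ^ 2))
    (fun s _ => ((hasDerivAt_abs_rpow_comp_affine (by linarith) e d s).add
      (hasDerivAt_abs_rpow_comp_affine (by linarith) e (-d) s)).neg)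
    (fun s _ => ((hasDerivAt_deriv_abs_rpow_comp_affine hq e d s).add
      (hasDerivAt_deriv_abs_rpow_comp_affine hq e (-d) s)).neg)
    fun s _ => by
      have := abs_rpow_le_abs_add_rpow_add_abs_sub_rpow (by linarith : 0 ≤ q - 2) e (s * d)
      have hq1 : 0 ≤ q * (q - 1) * d ^ 2 := mul_nonneg (by nlinarith) (sq_nonneg d)
      simp only [mul_neg, neg_sq, ← sub_eq_add_neg]
      nlinarith
  simp only [one_mul, zero_mul, add_zero, mul_neg, ← sub_eq_add_neg, sub_zero, sub_self] at h
  linarith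

theorem one_add_inv_rpow_sub_two_le_three {q : ℝ} (hq : 2 ≤ q) : (1 + q⁻¹) ^ (q - 2) ≤ 3 := by
  have hq0 : 0 < q := by linarith
  calc (1 + q⁻¹) ^ (q - 2) ≤ Real.exp q⁻¹ ^ (q - 2) := by
        gcongr
        linarith [Real.add_one_le_exp q⁻¹]
    _ = Real.exp (q⁻¹ * (q - 2)) := (Real.exp_mul _ _).symm
    _ ≤ Real.exp 1 := by
        gcongr
        rw [inv_mul_le_iff₀ hq0]; linarith
    _ ≤ 3 := by linarith [Real.exp_one_lt_d9]

theorem abs_rpow_taylor_remainder_le_of_abs_le {q ρ e t : ℝ} (hq : 2 < q) (hρ0 : 0 < ρ)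
    (hρ : ρ < 1 / (2 * q)) (ht : 0 ≤ t) (he : |e| ≤ q * (ρ * t)) :
    q * (q - 1) / 2 * (|e| + ρ * t) ^ (q - 2) * (ρ * t) ^ 2 ≤ t ^ q := by
  have hqρ : q * ρ < 1 / 2 := by
    rw [lt_div_iff₀ (by linarith)] at hρ; linarith
  have hqq : 0 ≤ q * (q - 1) / 2 := by nlinarith
  have hcoef : q * (q - 1) / 2 * ρ ^ 2 ≤ 1 := by
    nlinarith [mul_pos (by linarith : 0 < q) hρ0, sq_nonneg ρ]
  have hbase : (q + 1) * ρ ≤ 1 := by nlinarith [mul_pos hρ0 (sub_pos.mpr hq)]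
  calc q * (q - 1) / 2 * (|e| + ρ * t) ^ (q - 2) * (ρ * t) ^ 2
      ≤ q * (q - 1) / 2 * ((q + 1) * ρ * t) ^ (q - 2) * (ρ * t) ^ 2 := by
        gcongr
        · linarith
    _ = q * (q - 1) / 2 * ρ ^ 2 * ((q + 1) * ρ) ^ (q - 2) * (t ^ (q - 2) * t ^ 2) := by
        rw [Real.mul_rpow (by positivity) ht]; ring
    _ ≤ 1 * 1 * (t ^ (q - 2) * t ^ 2) := by
        gcongr
        exact Real.rpow_le_one (by positivity) hbase (by linarith)
    _ = t ^ q := by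
        rw [one_mul, one_mul, ← Real.rpow_natCast,
          ← Real.rpow_add' ht (ne_of_gt (by push_cast; linarith))]
        norm_num

theorem abs_rpow_taylor_remainder_le_of_lt_abs {q ρ e t : ℝ} (hq : 2 < q) (hρ0 : 0 < ρ)
    (hρ : ρ < 1 / (2 * q)) (ht : 0 ≤ t) (he : q * (ρ * t) < |e|) :
    q * (q - 1) / 2 * (|e| + ρ * t) ^ (q - 2) * (ρ * t) ^ 2
      ≤ q * (q - 1) / 4 * |e| ^ (q - 2) * t ^ 2 := by
  have hq0 : 0 < q := by linarith
  have hqq : 0 ≤ q * (q - 1) / 2 := by nlinarith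
  have hρ4 : ρ < 1 / 4 := by
    calc ρ < 1 / (2 * q) := hρ
      _ ≤ 1 / 4 := by gcongr; linarith
  have hsum : |e| + ρ * t ≤ |e| * (1 + q⁻¹) := by
    have : ρ * t ≤ |e| / q := by rw [le_div_iff₀ hq0]; linarith
    rw [mul_one_add, ← div_eq_mul_inv]; linarith
  calc q * (q - 1) / 2 * (|e| + ρ * t) ^ (q - 2) * (ρ * t) ^ 2
      ≤ q * (q - 1) / 2 * (|e| * (1 + q⁻¹)) ^ (q - 2) * (ρ * t) ^ 2 := by
        gcongr
    _ = q * (q - 1) / 2 * (1 + q⁻¹) ^ (q - 2) * ρ ^ 2 * (|e| ^ (q - 2) * t ^ 2) := by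
        rw [Real.mul_rpow (abs_nonneg e) (by positivity)]; ring
    _ ≤ q * (q - 1) / 2 * 3 * (1 / 16) * (|e| ^ (q - 2) * t ^ 2) := by
        gcongr
        · exact one_add_inv_rpow_sub_two_le_three hq.le
        · nlinarith
    _ ≤ q * (q - 1) / 4 * |e| ^ (q - 2) * t ^ 2 := by
        have : 0 ≤ q * (q - 1) * (|e| ^ (q - 2) * t ^ 2) :=
          mul_nonneg (by nlinarith) (by positivity)
        linarith

theorem abs_add_mul_rpow_le {q ρ : ℝ} (hq : 2 < q) (hρ0 : 0 < ρ) (hρ : ρ < 1 / (2 * q))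
    (e d z : ℝ) :
    |e + ρ * d * z| ^ q ≤ |e| ^ q + q * |e| ^ (q - 2) * e * (ρ * d) * z
      + ((|e + d| ^ q + |e - d| ^ q) / 2 - |e| ^ q) * z ^ 2 + |d| ^ q * |z| ^ q := by
  set t := |d * z| with ht_def
  have ht : 0 ≤ t := abs_nonneg _
  have habs : |ρ * d * z| = ρ * t := by rw [mul_assoc, abs_mul, abs_of_pos hρ0]
  have hsq : (ρ * d * z) ^ 2 = (ρ * t) ^ 2 := by rw [← habs, sq_abs]
  have htq : t ^ q = |d| ^ q * |z| ^ q := by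
    rw [ht_def, abs_mul, Real.mul_rpow (abs_nonneg d) (abs_nonneg z)]
  have ht2 : t ^ 2 = d ^ 2 * z ^ 2 := by rw [sq_abs, mul_pow]
  have hgap := abs_rpow_second_diff_ge hq e d
  have hgap0 : 0 ≤ q * (q - 1) / 4 * |e| ^ (q - 2) * d ^ 2 := by
    have : 0 ≤ q * (q - 1) := by nlinarith
    positivity
  have htaylor := abs_add_rpow_le hq e (ρ * d * z)
  rw [habs, hsq] at htaylor
  have hlinear : q * |e| ^ (q - 2) * e * (ρ * d * z) = q * |e| ^ (q - 2) * e * (ρ * d) * z := by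
    ring
  rcases le_or_gt |e| (q * (ρ * t)) with he | he
  · have hrem := abs_rpow_taylor_remainder_le_of_abs_le hq hρ0 hρ ht he
    have : 0 ≤ ((|e + d| ^ q + |e - d| ^ q) / 2 - |e| ^ q) * z ^ 2 :=
      mul_nonneg (hgap0.trans hgap) (sq_nonneg z)
    linarith
  · have hrem := abs_rpow_taylor_remainder_le_of_lt_abs hq hρ0 hρ ht he
    have hgapz := mul_le_mul_of_nonneg_right hgap (sq_nonneg z)
    have : 0 ≤ |d| ^ q * |z| ^ q := by positivity
    rw [ht2] at hrem
    linarith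

theorem memLp_of_integrable_abs_rpow {α : Type*} [MeasurableSpace α] {μ : Measure α} {f : α → ℝ}
    (hf : AEStronglyMeasurable f μ) {q : ℝ} (hq : 0 < q)
    (hint : Integrable (fun x => |f x| ^ q) μ) : MemLp f (ENNReal.ofReal q) μ := by
  rw [← integrable_norm_rpow_iff hf (by simpa using hq) ENNReal.ofReal_ne_top,
    ENNReal.toReal_ofReal hq.le]
  simpa using hint

theorem stmt1_general {Ω : Type*} [MeasureSpace Ω] [IsProbabilityMeasure (volume : Measure Ω)]
    (q σ : ℝ) (hq : 2 < q)
    (Z : Ω → ℝ) (hZmeas : Measurable Z)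
    (hZint : Integrable (fun ω => |Z ω| ^ q))
    (hZmean : ∫ ω, Z ω = 0) (hZvar : ∫ ω, (Z ω) ^ 2 = 1)
    (hZq : ∫ ω, |Z ω| ^ q ≤ σ ^ (2 - q))
    (e d ρ : ℝ) (hρ0 : 0 < ρ) (hρ : ρ < 1 / (2 * q)) :
    ∫ ω, |e + ρ * d * Z ω| ^ q ≤
      (|e + d| ^ q + |e - d| ^ q) / 2 + σ ^ (2 - q) * |d| ^ q := by
  have hLq := memLp_of_integrable_abs_rpow hZmeas.aestronglyMeasurable (by linarith) hZint
  have hZ1 : Integrable Z := memLp_one_iff_integrable.mp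
    (hLq.mono_exponent (ENNReal.one_le_ofReal.mpr (by linarith)))
  have hZ2 : Integrable (fun ω => Z ω ^ 2) := (hLq.mono_exponent (p := 2) (by
    rw [← ENNReal.ofReal_ofNat]; exact ENNReal.ofReal_le_ofReal hq.le)).integrable_sq
  set Γ := (|e + d| ^ q + |e - d| ^ q) / 2 - |e| ^ q with hΓ
  have hmono := integral_mono_of_nonneg (ae_of_all _ fun ω => by positivity)
    (by fun_prop : Integrable fun ω => |e| ^ q + q * |e| ^ (q - 2) * e * (ρ * d) * Z ω
      + Γ * Z ω ^ 2 + |d| ^ q * |Z ω| ^ q)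
    (ae_of_all _ fun ω => abs_add_mul_rpow_le hq hρ0 hρ e d (Z ω))
  rw [integral_add (by fun_prop) (by fun_prop), integral_add (by fun_prop) (by fun_prop),
    integral_add (by fun_prop) (by fun_prop)] at hmono
  simp only [integral_const, integral_const_mul, hZmean, hZvar, probReal_univ, smul_eq_mul]
    at hmono
  linarith [mul_le_mul_of_nonneg_left hZq (by positivity : (0 : ℝ) ≤ |d| ^ q)]

theorem stmt1 {Ω : Type*} [MeasureSpace Ω] [IsProbabilityMeasure (volume : Measure Ω)]
    (q σ : ℝ) (hq : 2 < q) (hσ0 : 0 < σ) (hσ1 : σ ≤ 1)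
    (Z : Ω → ℝ) (hZmeas : Measurable Z)
    (hZint : Integrable (fun ω => |Z ω| ^ q))
    (hZmean : ∫ ω, Z ω = 0) (hZvar : ∫ ω, (Z ω) ^ 2 = 1)
    (hZq : ∫ ω, |Z ω| ^ q ≤ σ ^ (2 - q))
    (e d ρ : ℝ) (hρ0 : 0 < ρ) (hρ : ρ < 1 / (2 * q)) :
    ∫ ω, |e + ρ * d * Z ω| ^ q ≤
      (|e + d| ^ q + |e - d| ^ q) / 2 + σ ^ (2 - q) * |d| ^ q :=
  stmt1_general q σ hq Z hZmeas hZint hZmean hZvar hZq e d ρ hρ0 hρ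
end

section
/- Let $f_1,\ldots,f_q\in L^2(\Omega,\nu)$ where $(\Omega,\nu)=\prod_{i=1}^n(\Omega_i,\nu_i)$ is a finite product probability space with $\min$-atom probabilities $p_i$ and $\sigma_i=\sqrt{p_i(1-p_i)}$. Suppose $f_j$ depends only on the coordinates in $S_j\subset[n]$. For $i\ge 3$ let $T_i$ be the set of coordinates covered exactly $i$ times by $S_1,\ldots,S_q$, and set $\sigma_T=\prod_{t\in T}\sigma_t$. Then $|\mathbb{E}[\prod_{j=1}^q f_j]|\le \prod_{j=1}^q\|f_j\|_2\cdot\prod_{i=3}^q \sigma_{T_i}^{2-i}$. -/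
/-!
On one coordinate whose atoms have mass at least `σ²`, every function satisfies
`‖u‖_∞ ≤ σ⁻¹ ‖u‖₂`. So the expectation of a product of `k` nonnegative functions is at most
`σ^(2-k)` times the product of their `L²` norms when `k ≥ 3`: Cauchy–Schwarz on two factors and the
sup bound on the others. Integrating out the coordinates one at a time, each function is replaced
by its partial `L²` norm in that coordinate, which keeps its total `L²` norm and its dependence on
the remaining coordinates; a coordinate covered `k ≥ 3` times thus contributes `σ^(2-k)`. Finally
`σ_t² = p_t (1 - p_t) ≤ p_t` bounds every atom from below.
-/

open Finset

section OneCoordinate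

variable {α ι : Type*} [Fintype α] {ν : α → ℝ} {σ : ℝ}

lemma sum_mul_mul_le_sqrt_mul_sqrt (hν : ∀ a, 0 ≤ ν a) (v w : α → ℝ) :
    ∑ a, ν a * (v a * w a) ≤ √(∑ a, ν a * v a ^ 2) * √(∑ a, ν a * w a ^ 2) := by
  have hsq : ∀ (u : α → ℝ) a, (√(ν a) * u a) ^ 2 = ν a * u a ^ 2 := fun u a => by
    rw [mul_pow, Real.sq_sqrt (hν a)]
  calc ∑ a, ν a * (v a * w a) = ∑ a, (√(ν a) * v a) * (√(ν a) * w a) := by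
        refine sum_congr rfl fun a _ => ?_
        rw [mul_mul_mul_comm, Real.mul_self_sqrt (hν a)]
    _ ≤ _ := Real.sum_mul_le_sqrt_mul_sqrt _ _ _
    _ = _ := by simp only [hsq]

lemma mul_le_sqrt_sum_mul_sq (hν : ∀ a, σ ^ 2 ≤ ν a) (u : α → ℝ) (a : α) :
    σ * u a ≤ √(∑ b, ν b * u b ^ 2) :=
  Real.le_sqrt_of_sq_le <| calc
    (σ * u a) ^ 2 = σ ^ 2 * u a ^ 2 := mul_pow _ _ _
    _ ≤ ν a * u a ^ 2 := by gcongr; exact hν a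
    _ ≤ ∑ b, ν b * u b ^ 2 :=
      single_le_sum (fun b _ => mul_nonneg ((sq_nonneg σ).trans (hν b)) (sq_nonneg _))
        (mem_univ a)

lemma sum_mul_prod_le_prod_sqrt_of_card_le_two (hν : ∀ a, 0 ≤ ν a) (hsum : ∑ a, ν a = 1)
    {J : Finset ι} (hJ : #J ≤ 2) (u : ι → α → ℝ) :
    ∑ a, ν a * ∏ j ∈ J, u j a ≤ ∏ j ∈ J, √(∑ a, ν a * u j a ^ 2) := by
  classical
  interval_cases h : #J
  · simp [card_eq_zero.mp h, hsum]
  · obtain ⟨j, rfl⟩ := card_eq_one.mp h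
    simpa [hsum] using sum_mul_mul_le_sqrt_mul_sqrt hν (u j) 1
  · obtain ⟨i, j, hij, rfl⟩ := card_eq_two.mp h
    simpa [prod_pair hij] using sum_mul_mul_le_sqrt_mul_sqrt hν (u i) (u j)

-- `#J - 2` is truncated subtraction: no loss for at most two factors.
lemma sum_mul_prod_le (hσ : 0 < σ) (hν : ∀ a, σ ^ 2 ≤ ν a) (hsum : ∑ a, ν a = 1)
    (J : Finset ι) {u : ι → α → ℝ} (hu : ∀ j a, 0 ≤ u j a) :
    ∑ a, ν a * ∏ j ∈ J, u j a ≤ σ⁻¹ ^ (#J - 2) * ∏ j ∈ J, √(∑ a, ν a * u j a ^ 2) := by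
  classical
  have hν₀ : ∀ a, 0 ≤ ν a := fun a => (sq_nonneg σ).trans (hν a)
  induction J using Finset.induction_on with
  | empty => simpa using sum_mul_prod_le_prod_sqrt_of_card_le_two hν₀ hsum (J := ∅) (by simp) u
  | insert j J hj ih =>
    rw [card_insert_of_notMem hj]
    by_cases hJ : #J < 2
    · simpa [Nat.sub_eq_zero_of_le (show #J + 1 ≤ 2 by omega)] using
        sum_mul_prod_le_prod_sqrt_of_card_le_two hν₀ hsum
          (show #(insert j J) ≤ 2 by rw [card_insert_of_notMem hj]; omega) u
    set N := √(∑ a, ν a * u j a ^ 2)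
    have hsup : ∀ a, u j a ≤ σ⁻¹ * N := fun a => by
      rw [inv_mul_eq_div, le_div_iff₀' hσ]; exact mul_le_sqrt_sum_mul_sq hν (u j) a
    calc ∑ a, ν a * ∏ i ∈ insert j J, u i a
        ≤ ∑ a, σ⁻¹ * N * (ν a * ∏ i ∈ J, u i a) := by
          refine sum_le_sum fun a _ => ?_
          rw [prod_insert hj, mul_left_comm]
          gcongr
          exacts [mul_nonneg (hν₀ a) (prod_nonneg fun i _ => hu i a), hsup a]
      _ ≤ σ⁻¹ * N * (σ⁻¹ ^ (#J - 2) * ∏ i ∈ J, √(∑ a, ν a * u i a ^ 2)) := by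
          rw [← mul_sum]; gcongr
      _ = σ⁻¹ ^ (#J + 1 - 2) * ∏ i ∈ insert j J, √(∑ a, ν a * u i a ^ 2) := by
          rw [prod_insert hj, show #J + 1 - 2 = #J - 2 + 1 by omega, pow_succ]; ring

lemma sum_mul_prod_univ_le_of_const [Fintype ι] [DecidableEq ι] (hσ : 0 < σ)
    (hν : ∀ a, σ ^ 2 ≤ ν a) (hsum : ∑ a, ν a = 1) (J : Finset ι) {u : ι → α → ℝ}
    (hu : ∀ j a, 0 ≤ u j a) (hconst : ∀ j ∉ J, ∀ a b, u j a = u j b) :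
    ∑ a, ν a * ∏ j, u j a ≤ σ⁻¹ ^ (#J - 2) * ∏ j, √(∑ a, ν a * u j a ^ 2) := by
  set N : ι → ℝ := fun j => √(∑ a, ν a * u j a ^ 2)
  have hN : ∀ j ∉ J, ∀ a, N j = u j a := fun j hj a => by
    simp only [N, hconst j hj _ a, ← sum_mul, hsum, one_mul, Real.sqrt_sq (hu j a)]
  have hsplit : ∀ a, ∏ j, u j a = (∏ j ∈ J, u j a) * ∏ j ∈ Jᶜ, N j := fun a => by
    rw [← prod_mul_prod_compl J]
    congr 1
    exact prod_congr rfl fun j hj => (hN j (mem_compl.mp hj) a).symm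
  calc ∑ a, ν a * ∏ j, u j a = (∑ a, ν a * ∏ j ∈ J, u j a) * ∏ j ∈ Jᶜ, N j := by
        simp only [hsplit, sum_mul, mul_assoc]
    _ ≤ (σ⁻¹ ^ (#J - 2) * ∏ j ∈ J, N j) * ∏ j ∈ Jᶜ, N j := by
        gcongr
        exact sum_mul_prod_le hσ hν hsum J hu
    _ = σ⁻¹ ^ (#J - 2) * ∏ j, N j := by rw [mul_assoc, prod_mul_prod_compl]

end OneCoordinate

section ProductSpace

variable {ι : Type*} [Fintype ι] [DecidableEq ι] {Ω : ι → Type*} [∀ i, Fintype (Ω i)]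

def piExpect (ν : ∀ i, Ω i → ℝ) (F : (∀ i, Ω i) → ℝ) : ℝ :=
  ∑ x, (∏ i, ν i (x i)) * F x

lemma piExpect_mono {ν : ∀ i, Ω i → ℝ} (hν : ∀ i a, 0 ≤ ν i a) {F G : (∀ i, Ω i) → ℝ}
    (h : ∀ x, F x ≤ G x) : piExpect ν F ≤ piExpect ν G :=
  sum_le_sum fun x _ => mul_le_mul_of_nonneg_left (h x) (prod_nonneg fun i _ => hν i (x i))

lemma piExpect_const_mul (ν : ∀ i, Ω i → ℝ) (c : ℝ) (F : (∀ i, Ω i) → ℝ) :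
    piExpect ν (fun x => c * F x) = c * piExpect ν F := by
  simp only [piExpect, mul_sum, mul_left_comm]

lemma abs_piExpect_le {ν : ∀ i, Ω i → ℝ} (hν : ∀ i a, 0 ≤ ν i a) (F : (∀ i, Ω i) → ℝ) :
    |piExpect ν F| ≤ piExpect ν fun x => |F x| :=
  (abs_sum_le_sum_abs _ _).trans_eq <| sum_congr rfl fun x _ => by
    rw [abs_mul, abs_of_nonneg (prod_nonneg fun i _ => hν i (x i))]

end ProductSpace

lemma piExpect_fin_succ {n : ℕ} {Ω : Fin (n + 1) → Type*} [∀ i, Fintype (Ω i)]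
    (ν : ∀ i, Ω i → ℝ) (F : (∀ i, Ω i) → ℝ) :
    piExpect ν F =
      piExpect (fun i : Fin n => ν i.succ) fun y => ∑ a, ν 0 a * F (Fin.cons a y) := by
  rw [piExpect, ← (Fin.consEquiv Ω).sum_comp, Fintype.sum_prod_type, sum_comm]
  refine sum_congr rfl fun y _ => ?_
  simp only [mul_sum, Fin.prod_univ_succ]
  refine sum_congr rfl fun a _ => ?_
  simp only [Fin.consEquiv, Equiv.coe_fn_mk, Fin.cons_zero, Fin.cons_succ]
  ring

theorem piExpect_prod_le {κ : Type*} [Fintype κ] [DecidableEq κ] {n : ℕ}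
    {Ω : Fin n → Type*} [∀ i, Fintype (Ω i)] {ν : ∀ i, Ω i → ℝ} {σ : Fin n → ℝ}
    (hσ : ∀ i, 0 < σ i) (hν : ∀ i a, σ i ^ 2 ≤ ν i a) (hsum : ∀ i, ∑ a, ν i a = 1)
    {g : κ → (∀ i, Ω i) → ℝ} (hg : ∀ j x, 0 ≤ g j x) (S : κ → Finset (Fin n))
    (hdep : ∀ j x y, (∀ i ∈ S j, x i = y i) → g j x = g j y) :
    piExpect ν (fun x => ∏ j, g j x) ≤
      (∏ i, (σ i)⁻¹ ^ (#{j | i ∈ S j} - 2)) * ∏ j, √(piExpect ν fun x => g j x ^ 2) := by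
  induction n with
  | zero =>
    simp [piExpect, Real.sqrt_sq (hg _ _)]
  | succ n ih =>
    set h : κ → (∀ i : Fin n, Ω i.succ) → ℝ :=
      fun j y => √(∑ a, ν 0 a * g j (Fin.cons a y) ^ 2)
    have hν₀ : ∀ i a, 0 ≤ ν i a := fun i a => (sq_nonneg _).trans (hν i a)
    have hfirst : ∀ y, ∑ a, ν 0 a * ∏ j, g j (Fin.cons a y) ≤
        (σ 0)⁻¹ ^ (#{j | 0 ∈ S j} - 2) * ∏ j, h j y := fun y =>
      sum_mul_prod_univ_le_of_const (hσ 0) (hν 0) (hsum 0) _ (fun j a => hg j _)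
        fun j hj a b => hdep j _ _ fun i hi => by
          cases i using Fin.cases with
          | zero => simp_all
          | succ i => simp
    have hrest := ih (fun i => hσ i.succ) (fun i => hν i.succ) (fun i => hsum i.succ)
      (g := h) (fun j y => Real.sqrt_nonneg _) (fun j => {i | i.succ ∈ S j})
      fun j y z hyz => by
        simp only [h]
        congr! 4 with a
        refine hdep j _ _ fun i hi => ?_
        cases i using Fin.cases with
        | zero => rfl
        | succ i => simpa using hyz i (by simpa using hi)
    have hnorm : ∀ j, piExpect (fun i : Fin n => ν i.succ) (fun y => h j y ^ 2) =
        piExpect ν fun x => g j x ^ 2 := fun j => by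
      rw [piExpect_fin_succ ν]
      congr! 2 with y
      exact Real.sq_sqrt (sum_nonneg fun a _ => mul_nonneg (hν₀ 0 a) (sq_nonneg _))
    calc piExpect ν (fun x => ∏ j, g j x)
        = piExpect (fun i : Fin n => ν i.succ) fun y => ∑ a, ν 0 a * ∏ j, g j (Fin.cons a y) :=
          piExpect_fin_succ ν _
      _ ≤ piExpect (fun i : Fin n => ν i.succ) fun y =>
            (σ 0)⁻¹ ^ (#{j | 0 ∈ S j} - 2) * ∏ j, h j y :=
          piExpect_mono (fun i => hν₀ i.succ) hfirst
      _ ≤ (σ 0)⁻¹ ^ (#{j | 0 ∈ S j} - 2) *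
            ((∏ i : Fin n, (σ i.succ)⁻¹ ^ (#{j | i.succ ∈ S j} - 2)) *
              ∏ j, √(piExpect (fun i : Fin n => ν i.succ) fun y => h j y ^ 2)) := by
          rw [piExpect_const_mul]
          gcongr
          · exact pow_nonneg (inv_nonneg.mpr (hσ 0).le) _
          · simpa only [mem_filter, mem_univ, true_and] using hrest
      _ = _ := by
          simp only [hnorm, Fin.prod_univ_succ, mul_assoc]

lemma prod_inv_pow_sub_two_eq_prod_Icc {ι : Type*} [Fintype ι] {σ : ι → ℝ}
    (hσ : ∀ t, 0 ≤ σ t) {c : ι → ℕ} {q : ℕ} (hc : ∀ t, c t ≤ q) :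
    ∏ t, (σ t)⁻¹ ^ (c t - 2) = ∏ k ∈ Icc 3 q, (∏ t with c t = k, σ t) ^ ((2 : ℝ) - k) := by
  have hfactor : ∀ k ∈ Icc 3 q,
      (∏ t with c t = k, σ t) ^ ((2 : ℝ) - k) = ∏ t with c t = k, (σ t)⁻¹ ^ (c t - 2) := by
    intro k hk
    have hk : 2 ≤ k := by simp at hk; omega
    rw [show (2 : ℝ) - k = -((k - 2 : ℕ) : ℝ) by push_cast [hk]; ring,
      Real.rpow_neg (prod_nonneg fun t _ => hσ t), Real.rpow_natCast, ← inv_pow, ← prod_inv_distrib,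
      ← prod_pow]
    exact prod_congr rfl fun t ht => by rw [(mem_filter.mp ht).2]
  rw [prod_congr rfl hfactor, prod_fiberwise_eq_prod_filter, prod_filter_of_ne]
  intro t _ ht
  have : c t - 2 ≠ 0 := fun h => ht (by rw [h, pow_zero])
  exact mem_Icc.mpr ⟨by omega, hc t⟩

theorem stmt3 {n q : ℕ} (Ω : Fin n → Type*) [∀ i, Fintype (Ω i)]
    (ν : ∀ i, Ω i → ℝ) (p : Fin n → ℝ)
    (hp : ∀ i, 0 < p i ∧ p i ≤ 1 / 2)
    (hν : ∀ i x, p i ≤ ν i x) (hsum : ∀ i, ∑ x, ν i x = 1)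
    (f : Fin q → (∀ i, Ω i) → ℝ) (S : Fin q → Finset (Fin n))
    (hdep : ∀ j x y, (∀ i ∈ S j, x i = y i) → f j x = f j y) :
    |∑ x : ∀ i, Ω i, (∏ i, ν i (x i)) * ∏ j, f j x| ≤
      (∏ j, Real.sqrt (∑ x : ∀ i, Ω i, (∏ i, ν i (x i)) * (f j x) ^ 2)) *
        ∏ k ∈ Finset.Icc 3 q,
          (∏ t ∈ Finset.univ.filter
              (fun t : Fin n => (Finset.univ.filter (fun j : Fin q => t ∈ S j)).card = k),
            Real.sqrt (p t * (1 - p t))) ^ ((2 : ℝ) - k) := by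
  set σ : Fin n → ℝ := fun t => √(p t * (1 - p t))
  have hvar : ∀ t, 0 < p t * (1 - p t) := fun t => mul_pos (hp t).1 (by linarith [(hp t).2])
  have hσ : ∀ t, 0 < σ t := fun t => Real.sqrt_pos.mpr (hvar t)
  have hσν : ∀ t x, σ t ^ 2 ≤ ν t x := fun t x => by
    rw [Real.sq_sqrt (hvar t).le]
    nlinarith [(hp t).1, hν t x]
  have hν₀ : ∀ i x, 0 ≤ ν i x := fun i x => (hp i).1.le.trans (hν i x)
  calc |piExpect ν fun x => ∏ j, f j x|
      ≤ piExpect ν fun x => ∏ j, |f j x| := by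
        simpa only [abs_prod] using abs_piExpect_le hν₀ fun x => ∏ j, f j x
    _ ≤ (∏ t, (σ t)⁻¹ ^ (#{j | t ∈ S j} - 2)) * ∏ j, √(piExpect ν fun x => |f j x| ^ 2) :=
        piExpect_prod_le hσ hσν hsum (fun j x => abs_nonneg _) S
          fun j x y hxy => by rw [hdep j x y hxy]
    _ = _ := by
        rw [prod_inv_pow_sub_two_eq_prod_Icc (fun t => (hσ t).le)
          fun t => (card_filter_le _ _).trans (card_fin q).le, mul_comm]
        simp only [sq_abs]
        rfl
end

section
/- Let $p\in(0,1/2]$ and let $f:\{0,1\}^n\to\{0,1\}$ be an $(r,\delta)$-global Boolean function with respect to $\mu_p$ (meaning $\mu_p(f_{J\to 1})\le\mu_p(f)+\delta$ for every set $J$ of at most $r$ coordinates) with $\mu_p(f)\le\delta$. Then for every $S\subset[n]$ with $|S|\le r$, the generalised influence satisfies $\mathrm{I}_S(f)\le 8^r\delta$. -/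
open Finset

/-- Weight of a point of the `p`-biased cube. -/
noncomputable def cubeWt {n : ℕ} (p : ℝ) (x : Fin n → Bool) : ℝ :=
  ∏ i, if x i then p else 1 - p

/-- Expectation with respect to the `p`-biased measure on `{0,1}ⁿ`. -/
noncomputable def cubeE {n : ℕ} (p : ℝ) (f : (Fin n → Bool) → ℝ) : ℝ :=
  ∑ x : Fin n → Bool, cubeWt p x * f x

/-- `restrict S B f` is the restriction `f_{S→x}` of `f` where the coordinates of
`S` are fixed according to the indicator of `B` (i.e. coordinates in `S ∩ B` are set
to `1` and coordinates in `S \ B` are set to `0`). -/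
def cubeRestrict {n : ℕ} (S B : Finset (Fin n)) (f : (Fin n → Bool) → ℝ) :
    (Fin n → Bool) → ℝ :=
  fun y => f (fun i => if i ∈ S then decide (i ∈ B) else y i)

/-- Generalised influence
`I_S(f) = E_{μ_p}[(∑_{x ∈ {0,1}^S} (-1)^{|S|-|x|} f_{S→x})²]`. -/
noncomputable def genInf {n : ℕ} (p : ℝ) (S : Finset (Fin n))
    (f : (Fin n → Bool) → ℝ) : ℝ :=
  cubeE p (fun y =>
    (∑ B ∈ S.powerset, (-1 : ℝ) ^ (S.card - B.card) * cubeRestrict S B f y) ^ 2)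

/-- `f` is `(r,δ)`-global: restricting any set of at most `r` coordinates to `1`
increases the measure by at most `δ`. -/
def isGlobal {n : ℕ} (p : ℝ) (r : ℕ) (δ : ℝ) (f : (Fin n → Bool) → ℝ) : Prop :=
  ∀ J : Finset (Fin n), J.card ≤ r → cubeE p (cubeRestrict J J f) ≤ cubeE p f + δ

section helpers

variable {n : ℕ} {p : ℝ}

set_option linter.unnecessarySeqFocus false

lemma cubeWt_nonneg (hp0 : 0 ≤ p) (hp1 : p ≤ 1) (x : Fin n → Bool) : 0 ≤ cubeWt p x :=
  Finset.prod_nonneg fun i _ => by split <;> linarith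

lemma cubeE_mono (hp0 : 0 ≤ p) (hp1 : p ≤ 1) {f g : (Fin n → Bool) → ℝ}
    (h : ∀ x, f x ≤ g x) : cubeE p f ≤ cubeE p g :=
  Finset.sum_le_sum fun x _ => mul_le_mul_of_nonneg_left (h x) (cubeWt_nonneg hp0 hp1 x)

lemma cubeE_nonneg (hp0 : 0 ≤ p) (hp1 : p ≤ 1) {f : (Fin n → Bool) → ℝ}
    (hf : ∀ x, 0 ≤ f x) : 0 ≤ cubeE p f := by
  have := cubeE_mono hp0 hp1 (f := fun _ => (0:ℝ)) (g := f) hf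
  simpa [cubeE] using this

lemma cubeWt_eq (i : Fin n) (y : Fin n → Bool) :
    cubeWt p y = (if y i then p else 1 - p) *
      ∏ j ∈ univ.erase i, (if y j then p else 1 - p) :=
  (Finset.mul_prod_erase univ _ (mem_univ i)).symm

lemma wprod_update (i : Fin n) (y : Fin n → Bool) (b : Bool) :
    (∏ j ∈ univ.erase i, (if Function.update y i b j then p else 1 - p))
      = ∏ j ∈ univ.erase i, (if y j then p else 1 - p) :=
  Finset.prod_congr rfl fun j hj => by
    rw [Function.update_of_ne (mem_erase.1 hj).1]

lemma cube_step (hp0 : 0 < p) (hp1 : p < 1) (i : Fin n) (g : (Fin n → Bool) → ℝ)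
    (hg : ∀ y, 0 ≤ g y) :
    (1 - p) * cubeE p (fun y => g (Function.update y i false)) ≤ cubeE p g := by
  classical
  set w : (Fin n → Bool) → ℝ := fun y => ∏ j ∈ univ.erase i, (if y j then p else 1 - p)
    with hw
  have hwnn : ∀ y, 0 ≤ w y := fun y =>
    Finset.prod_nonneg fun j _ => by split <;> linarith
  have key : cubeE p (fun y => g (Function.update y i false))
      = ∑ z ∈ univ.filter (fun z => z i = false), w z * g z := by
    rw [cubeE, ← Finset.sum_filter_add_sum_filter_not univ (fun y => y i = false)]
    have h1 : ∑ y ∈ univ.filter (fun y => y i = false),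
        cubeWt p y * g (Function.update y i false)
        = ∑ z ∈ univ.filter (fun z => z i = false), (1 - p) * (w z * g z) := by
      refine Finset.sum_congr rfl fun y hy => ?_
      have hyi : y i = false := (mem_filter.1 hy).2
      have hupd : Function.update y i false = y := by
        rw [← hyi]; exact Function.update_eq_self i y
      rw [hupd, cubeWt_eq i y, hyi]
      simp [hw]
      ring
    have h2 : ∑ y ∈ univ.filter (fun y => ¬ y i = false),
        cubeWt p y * g (Function.update y i false)
        = ∑ z ∈ univ.filter (fun z => z i = false), p * (w z * g z) := by
      refine Finset.sum_nbij' (fun y => Function.update y i false)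
        (fun z => Function.update z i true) ?_ ?_ ?_ ?_ ?_
      · intro y hy
        simp [Function.update_self]
      · intro z hz
        simp [Function.update_self]
      · intro y hy
        have hyi : y i = true := by
          have := (mem_filter.1 hy).2
          simpa using this
        funext j
        by_cases hj : j = i
        · subst hj; simp [Function.update_self, hyi]
        · simp [Function.update_of_ne hj]
      · intro z hz
        have hzi : z i = false := (mem_filter.1 hz).2
        funext j
        by_cases hj : j = i
        · subst hj; simp [Function.update_self, hzi]
        · simp [Function.update_of_ne hj]
      · intro y hy
        have hyi : y i = true := by
          have := (mem_filter.1 hy).2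
          simpa using this
        rw [cubeWt_eq i y, hyi]
        have hwu : w (Function.update y i false) = w y := wprod_update i y false
        simp only [hwu, if_true]
        ring
    rw [h1, h2, ← Finset.sum_add_distrib]
    refine Finset.sum_congr rfl fun z hz => ?_
    ring
  rw [key, Finset.mul_sum]
  have : ∀ z ∈ univ.filter (fun z : Fin n → Bool => z i = false),
      (1 - p) * (w z * g z) = cubeWt p z * g z := by
    intro z hz
    have hzi : z i = false := (mem_filter.1 hz).2
    rw [cubeWt_eq i z, hzi]
    simp [hw]
    ring
  rw [Finset.sum_congr rfl this]
  refine Finset.sum_le_sum_of_subset_of_nonneg (Finset.filter_subset _ _) ?_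
  intro x _ _
  exact mul_nonneg (cubeWt_nonneg (le_of_lt hp0) (le_of_lt hp1) x) (hg x)

/-- restriction to a superset, with extra coordinates fixed to `0`, costs at most
`(1-p)^{-(|S|-|B|)}`. -/
lemma restrict_mono (hp0 : 0 < p) (hp1 : p < 1) (f : (Fin n → Bool) → ℝ)
    (hf : ∀ x, 0 ≤ f x) :
    ∀ (k : ℕ) (S B : Finset (Fin n)), B ⊆ S → S.card - B.card = k →
      (1 - p) ^ k * cubeE p (cubeRestrict S B f) ≤ cubeE p (cubeRestrict B B f) := by
  intro k
  induction k with
  | zero =>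
    intro S B hBS hcard
    have hSB : S = B := by
      apply (Finset.eq_of_subset_of_card_le hBS ?_).symm
      omega
    subst hSB
    simp
  | succ k ih =>
    intro S B hBS hcard
    have hlt : B.card < S.card := by
      have := Finset.card_le_card hBS
      omega
    have hne : (S \ B).Nonempty := by
      rw [Finset.sdiff_nonempty]
      intro h
      have := Finset.card_le_card h
      omega
    obtain ⟨i, hi⟩ := hne
    have hiS : i ∈ S := (Finset.mem_sdiff.1 hi).1
    have hiB : i ∉ B := (Finset.mem_sdiff.1 hi).2
    set S' := S.erase i with hS'
    have hBS' : B ⊆ S' := fun j hj => Finset.mem_erase.2 ⟨fun h => hiB (h ▸ hj), hBS hj⟩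
    have hcard' : S'.card - B.card = k := by
      rw [hS', Finset.card_erase_of_mem hiS]; omega
    have hfe : ∀ y, cubeRestrict S B f y = cubeRestrict S' B f (Function.update y i false) := by
      intro y
      unfold cubeRestrict
      congr 1
      funext j
      by_cases hj : j = i
      · subst hj
        simp [hiS, hiB, hS']
      · by_cases hjS : j ∈ S
        · have : j ∈ S' := Finset.mem_erase.2 ⟨hj, hjS⟩
          simp [hjS, this]
        · have : j ∉ S' := fun h => hjS (Finset.mem_of_mem_erase h)
          simp [hjS, this, Function.update_of_ne hj]
    have h1p : (0:ℝ) ≤ (1-p)^k := pow_nonneg (by linarith) k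
    calc (1 - p) ^ (k+1) * cubeE p (cubeRestrict S B f)
        = (1-p)^k * ((1-p) * cubeE p (fun y => cubeRestrict S' B f (Function.update y i false))) := by
          rw [show cubeE p (cubeRestrict S B f) = cubeE p (fun y => cubeRestrict S' B f (Function.update y i false)) by
            unfold cubeE; exact Finset.sum_congr rfl fun y _ => by rw [hfe y]]
          ring
      _ ≤ (1-p)^k * cubeE p (cubeRestrict S' B f) := by
          apply mul_le_mul_of_nonneg_left _ h1p
          exact cube_step hp0 hp1 i _ (fun y => hf _)
      _ ≤ cubeE p (cubeRestrict B B f) := ih S' B hBS' hcard'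

end helpers

lemma pointwise_bound {n : ℕ} (S : Finset (Fin n)) (hS : S.Nonempty)
    (f : (Fin n → Bool) → ℝ) (hBool : ∀ x, f x = 0 ∨ f x = 1) (y : Fin n → Bool) :
    (∑ B ∈ S.powerset, (-1 : ℝ) ^ (S.card - B.card) * cubeRestrict S B f y) ^ 2
      ≤ 2 ^ (S.card - 1) * ∑ B ∈ S.powerset, cubeRestrict S B f y := by
  classical
  have ha : ∀ B, cubeRestrict S B f y = 0 ∨ cubeRestrict S B f y = 1 := fun B => hBool _
  have ha0 : ∀ B, 0 ≤ cubeRestrict S B f y := by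
    intro B; rcases ha B with h | h <;> rw [h] <;> norm_num
  have ha1 : ∀ B, cubeRestrict S B f y ≤ 1 := by
    intro B; rcases ha B with h | h <;> rw [h] <;> norm_num
  set D := ∑ B ∈ S.powerset, (-1 : ℝ) ^ (S.card - B.card) * cubeRestrict S B f y with hD
  have habs1 : |D| ≤ ∑ B ∈ S.powerset, cubeRestrict S B f y := by
    refine (Finset.abs_sum_le_sum_abs _ _).trans ?_
    refine Finset.sum_le_sum fun B _ => ?_
    rw [abs_mul, abs_pow, abs_neg, abs_one, one_pow, one_mul, abs_of_nonneg (ha0 B)]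
  obtain ⟨i, hiS⟩ := hS
  have habs2 : |D| ≤ 2 ^ (S.card - 1) := by
    set S' := S.erase i with hS'
    have hins : S = insert i S' := (Finset.insert_erase hiS).symm
    have hiS' : i ∉ S' := Finset.notMem_erase i S
    have hcard' : S'.card = S.card - 1 := by rw [hS', Finset.card_erase_of_mem hiS]
    have hcardS : S.card = S'.card + 1 := by
      have := Finset.card_pos.2 ⟨i, hiS⟩
      omega
    have hsum : D = ∑ B ∈ S'.powerset,
        ((-1 : ℝ) ^ (S.card - B.card) * cubeRestrict S B f y
          + (-1 : ℝ) ^ (S.card - (insert i B).card) * cubeRestrict S (insert i B) f y) := by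
      rw [hD]
      conv_lhs => rw [hins]
      rw [Finset.sum_powerset_insert hiS']
      rw [Finset.sum_add_distrib]
      congr 1
      · exact Finset.sum_congr rfl fun B hB => by rw [← hins]
      · exact Finset.sum_congr rfl fun B hB => by rw [← hins]
    rw [hsum]
    calc |∑ B ∈ S'.powerset, ((-1 : ℝ) ^ (S.card - B.card) * cubeRestrict S B f y
          + (-1 : ℝ) ^ (S.card - (insert i B).card) * cubeRestrict S (insert i B) f y)|
        ≤ ∑ B ∈ S'.powerset, |(-1 : ℝ) ^ (S.card - B.card) * cubeRestrict S B f y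
          + (-1 : ℝ) ^ (S.card - (insert i B).card) * cubeRestrict S (insert i B) f y| :=
          Finset.abs_sum_le_sum_abs _ _
      _ ≤ ∑ B ∈ S'.powerset, 1 := by
          refine Finset.sum_le_sum fun B hB => ?_
          have hBsub : B ⊆ S' := Finset.mem_powerset.1 hB
          have hiB : i ∉ B := fun h => hiS' (hBsub h)
          have hBcard : B.card ≤ S'.card := Finset.card_le_card hBsub
          have hinscard : (insert i B).card = B.card + 1 := Finset.card_insert_of_notMem hiB
          have hsign : ((-1 : ℝ)) ^ (S.card - B.card)
              = -((-1 : ℝ) ^ (S.card - (insert i B).card)) := by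
            rw [hinscard]
            have h1 : S.card - B.card = (S.card - (B.card + 1)) + 1 := by omega
            rw [h1, pow_succ]
            ring
          rw [hsign]
          have e1 := ha0 B; have e2 := ha1 B
          have e3 := ha0 (insert i B); have e4 := ha1 (insert i B)
          rcases neg_one_pow_eq_or ℝ (S.card - (insert i B).card) with hε | hε <;>
            rw [hε] <;> rw [abs_le] <;> constructor <;> nlinarith
      _ = (S'.powerset.card : ℝ) := by rw [Finset.sum_const, nsmul_eq_mul, mul_one]
      _ = 2 ^ (S.card - 1) := by
          rw [Finset.card_powerset, hcard']
          push_cast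
          ring
  have hT0 : 0 ≤ ∑ B ∈ S.powerset, cubeRestrict S B f y :=
    Finset.sum_nonneg fun B _ => ha0 B
  calc D ^ 2 = |D| * |D| := by rw [sq, ← abs_mul_self D, abs_mul]
    _ ≤ 2 ^ (S.card - 1) * ∑ B ∈ S.powerset, cubeRestrict S B f y :=
        mul_le_mul habs2 habs1 (abs_nonneg D) (by positivity)

lemma cubeE_mul_sum {n : ℕ} (p : ℝ) (c : ℝ) (P : Finset (Finset (Fin n)))
    (g : Finset (Fin n) → (Fin n → Bool) → ℝ) :
    cubeE p (fun y => c * ∑ B ∈ P, g B y) = c * ∑ B ∈ P, cubeE p (g B) := by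
  unfold cubeE
  simp only [Finset.mul_sum]
  rw [Finset.sum_comm]
  exact Finset.sum_congr rfl fun B _ => Finset.sum_congr rfl fun x _ => by ring


theorem stmt4 {n : ℕ} (p : ℝ) (hp0 : 0 < p) (hp : p ≤ 1 / 2)
    (f : (Fin n → Bool) → ℝ) (hBool : ∀ x, f x = 0 ∨ f x = 1)
    (r : ℕ) (δ : ℝ) (hglob : isGlobal p r δ f) (hsparse : cubeE p f ≤ δ) :
    ∀ S : Finset (Fin n), S.card ≤ r → genInf p S f ≤ 8 ^ r * δ := by
  intro S hS
  have hp1 : p < 1 := by linarith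
  have hf0 : ∀ x, 0 ≤ f x := fun x => by rcases hBool x with h | h <;> rw [h] <;> norm_num
  have hEf0 : 0 ≤ cubeE p f := cubeE_nonneg hp0.le hp1.le hf0
  have hδ0 : 0 ≤ δ := le_trans hEf0 hsparse
  have h8r : (1:ℝ) ≤ 8 ^ r := one_le_pow₀ (by norm_num : (1:ℝ) ≤ 8)
  rcases S.eq_empty_or_nonempty with rfl | hSne
  · have heq : genInf p ∅ f = cubeE p f := by
      unfold genInf
      congr 1
      funext y
      rw [Finset.powerset_empty, Finset.sum_singleton]
      have : cubeRestrict ∅ ∅ f y = f y := by simp [cubeRestrict]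
      rw [this]
      simp only [Finset.card_empty, Nat.sub_zero, pow_zero, one_mul]
      rcases hBool y with h | h <;> rw [h] <;> norm_num
    rw [heq]
    calc cubeE p f ≤ δ := hsparse
      _ = 1 * δ := (one_mul δ).symm
      _ ≤ 8 ^ r * δ := mul_le_mul_of_nonneg_right h8r hδ0
  · set s := S.card with hs
    have hs1 : 1 ≤ s := Finset.card_pos.2 hSne
    have key : ∀ B ∈ S.powerset, cubeE p (cubeRestrict S B f) ≤ 2 ^ s * (2 * δ) := by
      intro B hB
      have hBsub : B ⊆ S := Finset.mem_powerset.1 hB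
      set m := S.card - B.card with hm
      have h1 := restrict_mono hp0 hp1 f hf0 m S B hBsub rfl
      have h2 : cubeE p (cubeRestrict B B f) ≤ 2 * δ := by
        have := hglob B (le_trans (Finset.card_le_card hBsub) hS)
        linarith
      have hE0 : 0 ≤ cubeE p (cubeRestrict S B f) :=
        cubeE_nonneg hp0.le hp1.le fun y => hf0 _
      have hhalf : ((1:ℝ)/2) ^ m ≤ (1 - p) ^ m := by
        apply pow_le_pow_left₀ (by norm_num) (by linarith)
      have h3 : ((1:ℝ)/2) ^ m * cubeE p (cubeRestrict S B f) ≤ 2 * δ :=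
        le_trans (mul_le_mul_of_nonneg_right hhalf hE0) (le_trans h1 h2)
      have h4 : cubeE p (cubeRestrict S B f)
          = 2 ^ m * (((1:ℝ)/2) ^ m * cubeE p (cubeRestrict S B f)) := by
        rw [← mul_assoc, ← mul_pow]
        norm_num
      calc cubeE p (cubeRestrict S B f)
          = 2 ^ m * (((1:ℝ)/2) ^ m * cubeE p (cubeRestrict S B f)) := h4
        _ ≤ 2 ^ m * (2 * δ) := mul_le_mul_of_nonneg_left h3 (by positivity)
        _ ≤ 2 ^ s * (2 * δ) := by
            apply mul_le_mul_of_nonneg_right _ (by linarith)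
            exact pow_le_pow_right₀ (by norm_num) (Nat.sub_le _ _)
    have step1 : genInf p S f
        ≤ cubeE p (fun y => 2 ^ (s - 1) * ∑ B ∈ S.powerset, cubeRestrict S B f y) := by
      unfold genInf
      exact cubeE_mono hp0.le hp1.le fun y => pointwise_bound S hSne f hBool y
    have step2 : cubeE p (fun y => (2:ℝ) ^ (s - 1) * ∑ B ∈ S.powerset, cubeRestrict S B f y)
        = 2 ^ (s - 1) * ∑ B ∈ S.powerset, cubeE p (cubeRestrict S B f) :=
      cubeE_mul_sum p _ _ _
    have step3 : ∑ B ∈ S.powerset, cubeE p (cubeRestrict S B f)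
        ≤ (2:ℝ) ^ s * (2 ^ s * (2 * δ)) := by
      calc ∑ B ∈ S.powerset, cubeE p (cubeRestrict S B f)
          ≤ ∑ _B ∈ S.powerset, (2:ℝ) ^ s * (2 * δ) := Finset.sum_le_sum key
        _ = (S.powerset.card : ℝ) * ((2:ℝ) ^ s * (2 * δ)) := by
            rw [Finset.sum_const, nsmul_eq_mul]
        _ = (2:ℝ) ^ s * (2 ^ s * (2 * δ)) := by
            rw [Finset.card_powerset, ← hs]
            push_cast
            ring
    have h2s : (2:ℝ) ^ (s - 1) * 2 = 2 ^ s := by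
      rw [← pow_succ]
      congr 1
      omega
    have hfinal : (2:ℝ) ^ (s - 1) * ((2:ℝ) ^ s * (2 ^ s * (2 * δ))) = 8 ^ s * δ := by
      have h8 : (8:ℝ) ^ s = 2 ^ s * 2 ^ s * 2 ^ s := by
        rw [show (8:ℝ) = 2 * 2 * 2 by norm_num]
        rw [mul_pow, mul_pow]
      have hre : (2:ℝ) ^ (s - 1) * ((2:ℝ) ^ s * (2 ^ s * (2 * δ)))
          = ((2:ℝ) ^ (s - 1) * 2) * (2 ^ s * (2 ^ s * δ)) := by ring
      rw [hre, h2s, h8]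
      ring
    calc genInf p S f
        ≤ 2 ^ (s - 1) * ∑ B ∈ S.powerset, cubeE p (cubeRestrict S B f) := by
          rw [← step2]; exact step1
      _ ≤ (2:ℝ) ^ (s - 1) * ((2:ℝ) ^ s * (2 ^ s * (2 * δ))) :=
          mul_le_mul_of_nonneg_left step3 (by positivity)
      _ = 8 ^ s * δ := hfinal
      _ ≤ 8 ^ r * δ := by
          apply mul_le_mul_of_nonneg_right _ hδ0
          exact pow_le_pow_right₀ (by norm_num) hS
end

section
/- Let $p\in(0,1/2]$ and let $f:\{0,1\}^n\to\{0,1\}$ be a monotone Boolean function that is $(r,\delta)$-global with respect to $\mu_p$. Then for every nonempty $S\subset[n]$ with $|S|\le r$, the generalised influence satisfies $\mathrm{I}_S(f)\le 8^r\delta$. -/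
open Finset

/-!
Monotonicity and globalness bound every restriction from above: `f_{T→B} ≤ f_{B→1}`, so
`E f_{T→B} ≤ E f + δ` when `|B| ≤ r`. They also bound restrictions to zeros from below:
`E g = p E g_{j→1} + (1-p) E g_{j→0}` with `E g_{j→1} ≤ E f + δ`, so for `p ≤ 1/2` fixing one
more coordinate to `0` at most doubles the loss, and `E f_{T→B} ≥ E f - (2^{|T∖B|} - 1) δ`.
Pairing `B` with `B ∪ {i}` turns the alternating sum in `I_S(f)` into a signed sum of the
`2^{|S|-1}` differences `f_{S→B∪{i}} - f_{S→B} ∈ [0,1]`, so its square is at most `2^{|S|-1}` times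
their sum, whose expectation is at most `2^{|S|-1} 2^r δ` by the two bounds.
-/

open Function

theorem Finset.sum_powerset_insert_neg_one_pow {α R : Type*} [DecidableEq α] [CommRing R]
    {s : Finset α} {a : α} (ha : a ∉ s) (F : Finset α → R) :
    ∑ t ∈ (insert a s).powerset, (-1) ^ ((insert a s).card - t.card) * F t
      = ∑ t ∈ s.powerset, (-1) ^ (s.card - t.card) * (F (insert a t) - F t) := by
  rw [sum_powerset_insert ha, ← sum_add_distrib]
  refine sum_congr rfl fun t ht => ?_
  have hts := mem_powerset.1 ht
  have hat : a ∉ t := fun h => ha (hts h)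
  rw [card_insert_of_notMem ha, card_insert_of_notMem hat, Nat.add_sub_add_right,
    Nat.succ_sub (card_le_card hts), pow_succ]
  ring

theorem Finset.sq_sum_powerset_insert_neg_one_pow_le {α : Type*} [DecidableEq α]
    {s : Finset α} {a : α} (ha : a ∉ s) (F : Finset α → ℝ)
    (hF : ∀ t ⊆ s, F (insert a t) - F t ∈ Set.Icc 0 1) :
    (∑ t ∈ (insert a s).powerset, (-1) ^ ((insert a s).card - t.card) * F t) ^ 2
      ≤ 2 ^ s.card * ∑ t ∈ s.powerset, (F (insert a t) - F t) := by
  rw [sum_powerset_insert_neg_one_pow ha]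
  have habs : |∑ t ∈ s.powerset, (-1) ^ (s.card - t.card) * (F (insert a t) - F t)|
      ≤ ∑ t ∈ s.powerset, (F (insert a t) - F t) := by
    refine (abs_sum_le_sum_abs _ _).trans (sum_le_sum fun t ht => ?_)
    rw [abs_mul, abs_pow, abs_neg, abs_one, one_pow, one_mul,
      abs_of_nonneg (hF t (mem_powerset.1 ht)).1]
  have hnonneg : 0 ≤ ∑ t ∈ s.powerset, (F (insert a t) - F t) :=
    sum_nonneg fun t ht => (hF t (mem_powerset.1 ht)).1
  have hle : ∑ t ∈ s.powerset, (F (insert a t) - F t) ≤ 2 ^ s.card := by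
    calc _ ≤ ∑ t ∈ s.powerset, (1 : ℝ) := sum_le_sum fun t ht => (hF t (mem_powerset.1 ht)).2
      _ = 2 ^ s.card := by simp
  calc _ = |∑ t ∈ s.powerset, (-1) ^ (s.card - t.card) * (F (insert a t) - F t)| ^ 2 :=
        (sq_abs _).symm
    _ ≤ (∑ t ∈ s.powerset, (F (insert a t) - F t)) ^ 2 := pow_le_pow_left₀ (abs_nonneg _) habs 2
    _ ≤ 2 ^ s.card * ∑ t ∈ s.powerset, (F (insert a t) - F t) := by
      rw [sq]; exact mul_le_mul_of_nonneg_right hle hnonneg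

namespace Cube

variable {n : ℕ} {p : ℝ}

theorem cubeWt_nonneg (hp0 : 0 ≤ p) (hp1 : p ≤ 1) (x : Fin n → Bool) : 0 ≤ cubeWt p x :=
  prod_nonneg fun i _ => by split <;> linarith

theorem cubeE_mono (hp0 : 0 ≤ p) (hp1 : p ≤ 1) {g h : (Fin n → Bool) → ℝ} (hgh : g ≤ h) :
    cubeE p g ≤ cubeE p h :=
  sum_le_sum fun x _ => mul_le_mul_of_nonneg_left (hgh x) (cubeWt_nonneg hp0 hp1 x)

theorem cubeE_const_mul (c : ℝ) (g : (Fin n → Bool) → ℝ) :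
    cubeE p (fun y => c * g y) = c * cubeE p g := by
  simp only [cubeE, mul_sum, mul_left_comm]

theorem cubeE_sub (g h : (Fin n → Bool) → ℝ) :
    cubeE p (fun y => g y - h y) = cubeE p g - cubeE p h := by
  simp only [cubeE, mul_sub, sum_sub_distrib]

theorem cubeE_sum {ι : Type*} (s : Finset ι) (g : ι → (Fin n → Bool) → ℝ) :
    cubeE p (fun y => ∑ b ∈ s, g b y) = ∑ b ∈ s, cubeE p (g b) := by
  simp only [cubeE, mul_sum]
  exact sum_comm

theorem cubeE_eq_add_update (i : Fin n) (g : (Fin n → Bool) → ℝ) :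
    cubeE p g = p * cubeE p (fun y => g (update y i true))
      + (1 - p) * cubeE p (fun y => g (update y i false)) := by
  set e := Equiv.funSplitAt i Bool
  set w : Bool → ℝ := fun b => if b then p else 1 - p
  have he_self : ∀ b z, e.symm (b, z) i = b := by simp [e]
  have he_ne : ∀ b z (j : {j // j ≠ i}), e.symm (b, z) j = z j := fun b z j => by simp [e, j.2]
  have hsplit : ∀ h : (Fin n → Bool) → ℝ, cubeE p h =
      ∑ b : Bool, w b * ∑ z, (∏ j, w (z j)) * h (e.symm (b, z)) := by
    intro h
    rw [cubeE, ← e.symm.sum_comp, Fintype.sum_prod_type]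
    refine sum_congr rfl fun b _ => ?_
    rw [mul_sum]
    refine sum_congr rfl fun z _ => ?_
    rw [cubeWt, Fintype.prod_eq_mul_prod_subtype_ne _ i]
    simp only [he_self, he_ne, w]
    ring
  have hupdate : ∀ b c z, update (e.symm (b, z)) i c = e.symm (c, z) := by
    intro b c z
    ext j
    by_cases hj : j = i
    · subst hj; simp [he_self]
    · simp [hj, e]
  simp only [hsplit, hupdate, Fintype.sum_bool, w, ↓reduceIte, Bool.false_eq_true]
  ring

theorem cubeRestrict_insert {S : Finset (Fin n)} {j : Fin n} (hj : j ∉ S) (B : Finset (Fin n))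
    (f : (Fin n → Bool) → ℝ) (y : Fin n → Bool) :
    cubeRestrict (insert j S) B f y = cubeRestrict S B f (update y j (decide (j ∈ B))) := by
  unfold cubeRestrict
  congr 1
  ext i
  by_cases hij : i = j
  · subst hij; simp [hj]
  · simp [hij]

theorem cubeRestrict_insert_right {S : Finset (Fin n)} {j : Fin n} (hj : j ∉ S)
    (B : Finset (Fin n)) (f : (Fin n → Bool) → ℝ) :
    cubeRestrict S (insert j B) f = cubeRestrict S B f := by
  unfold cubeRestrict
  ext y
  congr 1
  ext i
  by_cases hi : i ∈ S
  · have : i ≠ j := fun h => hj (h ▸ hi)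
    simp [hi, this]
  · simp [hi]

section Monotone
variable {f : (Fin n → Bool) → ℝ}

theorem le_cubeRestrict_self (hf : Monotone f) (A : Finset (Fin n)) :
    f ≤ cubeRestrict A A f := fun y =>
  hf fun i => by by_cases hi : i ∈ A <;> simp [hi]

theorem cubeRestrict_mono_right (hf : Monotone f) {S B B' : Finset (Fin n)} (h : B ⊆ B') :
    cubeRestrict S B f ≤ cubeRestrict S B' f := fun y =>
  hf fun i => by
    by_cases hi : i ∈ S
    · simpa [hi, Bool.le_iff_imp] using @h i
    · simp [hi]

theorem cubeRestrict_le_cubeRestrict_self (hf : Monotone f) {S B : Finset (Fin n)} (h : B ⊆ S) :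
    cubeRestrict S B f ≤ cubeRestrict B B f := fun y =>
  hf fun i => by
    by_cases hi : i ∈ B
    · simp [hi, h hi]
    · by_cases hiS : i ∈ S <;> simp [hi, hiS]

end Monotone

section Global
variable {f : (Fin n → Bool) → ℝ} {r : ℕ} {δ : ℝ}

theorem delta_nonneg_of_isGlobal (hglob : isGlobal p r δ f) : 0 ≤ δ := by
  have h := hglob ∅ (by simp)
  have : cubeRestrict ∅ ∅ f = f := by ext y; simp [cubeRestrict]
  rw [this] at h
  linarith

theorem cubeE_cubeRestrict_le (hp0 : 0 ≤ p) (hp1 : p ≤ 1) (hf : Monotone f)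
    (hglob : isGlobal p r δ f) {B T : Finset (Fin n)} (hBT : B ⊆ T) (hB : B.card ≤ r) :
    cubeE p (cubeRestrict T B f) ≤ cubeE p f + δ :=
  (cubeE_mono hp0 hp1 (cubeRestrict_le_cubeRestrict_self hf hBT)).trans (hglob B hB)

theorem sub_le_cubeE_cubeRestrict (hp0 : 0 ≤ p) (hp : p ≤ 1 / 2) (hf : Monotone f)
    (hglob : isGlobal p r δ f) {A Z : Finset (Fin n)} (hAZ : Disjoint A Z)
    (hr : (A ∪ Z).card ≤ r) :
    cubeE p f - (2 ^ Z.card - 1) * δ ≤ cubeE p (cubeRestrict (A ∪ Z) A f) := by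
  have hp1 : p ≤ 1 := by linarith
  have hδ := delta_nonneg_of_isGlobal hglob
  induction Z using Finset.induction_on with
  | empty => simpa using cubeE_mono hp0 hp1 (le_cubeRestrict_self hf A)
  | @insert j Z hj ih =>
    have hjA : j ∉ A := disjoint_right.1 hAZ (mem_insert_self j Z)
    have hjAZ : j ∉ A ∪ Z := by simp [hjA, hj]
    rw [union_insert] at hr ⊢
    have hprev := ih (hAZ.mono_right (subset_insert j Z))
      ((card_le_card (subset_insert _ _)).trans hr)
    have hsplit := cubeE_eq_add_update (p := p) j (cubeRestrict (A ∪ Z) A f)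
    have hone :
        cubeE p (fun y => cubeRestrict (A ∪ Z) A f (update y j true)) ≤ cubeE p f + δ := by
      have hsub : insert j A ⊆ insert j (A ∪ Z) := insert_subset_insert j subset_union_left
      have := cubeE_cubeRestrict_le hp0 hp1 hf hglob hsub ((card_le_card hsub).trans hr)
      simpa [funext (cubeRestrict_insert hjAZ (insert j A) f), cubeRestrict_insert_right hjAZ]
        using this
    have hzero : cubeE p (fun y => cubeRestrict (A ∪ Z) A f (update y j false))
        = cubeE p (cubeRestrict (insert j (A ∪ Z)) A f) := by
      simp [funext (cubeRestrict_insert hjAZ A f), hjA]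
    rw [← hzero, card_insert_of_notMem hj, pow_succ]
    have h2Z : (0 : ℝ) ≤ 2 ^ Z.card := by positivity
    have hkey : 0 ≤ (2 : ℝ) ^ Z.card * δ * (1 - 2 * p) := by
      have : 0 ≤ 1 - 2 * p := by linarith
      positivity
    nlinarith

theorem cubeE_cubeRestrict_insert_sub_le (hp0 : 0 ≤ p) (hp : p ≤ 1 / 2) (hf : Monotone f)
    (hglob : isGlobal p r δ f) {T B : Finset (Fin n)} {i : Fin n} (hBT : B ⊆ T)
    (hr : (insert i T).card ≤ r) :
    cubeE p (cubeRestrict (insert i T) (insert i B) f) - cubeE p (cubeRestrict (insert i T) B f)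
      ≤ 2 ^ r * δ := by
  have hδ := delta_nonneg_of_isGlobal hglob
  have hBS : B ⊆ insert i T := hBT.trans (subset_insert i T)
  have hiBS : insert i B ⊆ insert i T := insert_subset_insert i hBT
  have hupper := cubeE_cubeRestrict_le hp0 (by linarith) hf hglob hiBS
    ((card_le_card hiBS).trans hr)
  have hlower := sub_le_cubeE_cubeRestrict hp0 hp hf hglob (disjoint_sdiff (s := B))
    (by rwa [union_sdiff_of_subset hBS])
  rw [union_sdiff_of_subset hBS] at hlower
  have hpow : (2 : ℝ) ^ (insert i T \ B).card ≤ 2 ^ r :=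
    pow_le_pow_right₀ (by norm_num) ((card_le_card sdiff_subset).trans hr)
  nlinarith

theorem genInf_insert_le (hp0 : 0 ≤ p) (hp : p ≤ 1 / 2) (hf01 : ∀ x, f x ∈ Set.Icc 0 1)
    (hf : Monotone f) (hglob : isGlobal p r δ f) {T : Finset (Fin n)} {i : Fin n} (hi : i ∉ T)
    (hr : (insert i T).card ≤ r) :
    genInf p (insert i T) f ≤ 8 ^ r * δ := by
  set S := insert i T
  have hδ := delta_nonneg_of_isGlobal hglob
  have hT : (2 : ℝ) ^ T.card ≤ 2 ^ r :=
    pow_le_pow_right₀ (by norm_num) ((card_le_card (subset_insert i T)).trans hr)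
  have hpointwise : ∀ y, (∑ B ∈ S.powerset, (-1) ^ (S.card - B.card) * cubeRestrict S B f y) ^ 2
      ≤ 2 ^ T.card * ∑ B ∈ T.powerset,
        (cubeRestrict S (insert i B) f y - cubeRestrict S B f y) := fun y =>
    sq_sum_powerset_insert_neg_one_pow_le hi (fun B => cubeRestrict S B f y) fun B _ =>
      ⟨sub_nonneg.2 (cubeRestrict_mono_right hf (subset_insert i B) y),
        by
          have h1 : cubeRestrict S (insert i B) f y ≤ 1 := (hf01 _).2
          have h0 : 0 ≤ cubeRestrict S B f y := (hf01 _).1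
          linarith⟩
  calc genInf p S f
      ≤ 2 ^ T.card * ∑ B ∈ T.powerset,
          (cubeE p (cubeRestrict S (insert i B) f) - cubeE p (cubeRestrict S B f)) := by
        rw [genInf]
        refine (cubeE_mono hp0 (by linarith) hpointwise).trans_eq ?_
        rw [cubeE_const_mul, cubeE_sum]
        simp only [cubeE_sub]
    _ ≤ 2 ^ T.card * ∑ B ∈ T.powerset, 2 ^ r * δ := by
        gcongr with B hB
        exact cubeE_cubeRestrict_insert_sub_le hp0 hp hf hglob (mem_powerset.1 hB) hr
    _ = 2 ^ T.card * 2 ^ T.card * (2 ^ r * δ) := by simp [mul_assoc]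
    _ ≤ 2 ^ r * 2 ^ r * (2 ^ r * δ) := by gcongr
    _ = 8 ^ r * δ := by rw [show (8 : ℝ) = 2 * 2 * 2 by norm_num, mul_pow, mul_pow]; ring

end Global

end Cube

theorem stmt5 {n : ℕ} (p : ℝ) (hp0 : 0 < p) (hp : p ≤ 1 / 2)
    (f : (Fin n → Bool) → ℝ) (hBool : ∀ x, f x = 0 ∨ f x = 1)
    (hmono : ∀ x y : Fin n → Bool, (∀ i, x i = true → y i = true) → f x ≤ f y)
    (r : ℕ) (δ : ℝ) (hglob : isGlobal p r δ f) :
    ∀ S : Finset (Fin n), S.Nonempty → S.card ≤ r → genInf p S f ≤ 8 ^ r * δ := by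
  rintro S ⟨i, hi⟩ hr
  have hf01 : ∀ x, f x ∈ Set.Icc 0 1 := fun x => by rcases hBool x with h | h <;> simp [h]
  have hf : Monotone f := fun x y hxy => hmono x y fun j => Bool.le_iff_imp.1 (hxy j)
  rw [← insert_erase hi] at hr ⊢
  exact Cube.genInf_insert_le hp0.le hp hf01 hf hglob (notMem_erase i S) hr
end

section
/- Let $f:\{0,1\}^n\to\{0,1\}$ be a Boolean function on the uniform cube and let $r>0$. Then $\|f^{\le r}\|_2^2\le 3^r\,\mu_{1/2}(f)^{3/2}$, where $f^{\le r}$ is the truncation of $f$ to Fourier levels at most $r$ and $\mu_{1/2}(f)=\mathbb{E}[f]$ under the uniform measure. -/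
open Finset

/-- The `p`-biased Fourier character `χ_S`. -/
noncomputable def chi {n : ℕ} (p : ℝ) (S : Finset (Fin n)) (x : Fin n → Bool) : ℝ :=
  ∏ i ∈ S, ((if x i then (1 : ℝ) else 0) - p) / Real.sqrt (p * (1 - p))

/-- The `p`-biased Fourier coefficient `f̂(S)`. -/
noncomputable def fhat {n : ℕ} (p : ℝ) (f : (Fin n → Bool) → ℝ) (S : Finset (Fin n)) : ℝ :=
  cubeE p (fun x => f x * chi p S x)

/-- Truncation of `f` to Fourier levels at most `r`. -/
noncomputable def trunc {n : ℕ} (p : ℝ) (f : (Fin n → Bool) → ℝ) (r : ℕ) :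
    (Fin n → Bool) → ℝ :=
  fun x => ∑ T ∈ Finset.univ.filter (fun T : Finset (Fin n) => T.card ≤ r),
    fhat p f T * chi p T x

/-!
Let `W = f^{≤r}` and `m = ‖W‖₂² = ∑_{|S| ≤ r} f̂(S)²`. As `W` is the orthogonal projection of `f`,
`m = 𝔼[W f]`, and since `f² = f` two applications of Cauchy–Schwarz give
`𝔼[W f]⁴ ≤ 𝔼[W⁴] 𝔼[f]³`. The (2,4)-hypercontractive inequality
`𝔼[(∑ a_S χ_S)⁴] ≤ (∑ 3^|S| a_S²)²`, proved by splitting off one coordinate at a time as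
`E + χ_i D`, bounds `𝔼[W⁴] ≤ 9^r m²`. Hence `m² ≤ 9^r 𝔼[f]³`.
-/

open Function
open scoped BigOperators

section Cube

variable {n : ℕ}

lemma cubeE_half (f : (Fin n → Bool) → ℝ) : cubeE (1/2) f = 𝔼 x, f x := by
  have hwt : ∀ x : Fin n → Bool, cubeWt (1/2) x = (2 ^ n)⁻¹ := fun x => by
    rw [cubeWt, show (1 : ℝ) - 1/2 = 1/2 by norm_num]
    simp only [ite_self, prod_const, card_univ, Fintype.card_fin, one_div, inv_pow]
  simp only [cubeE, hwt, ← mul_sum, Fintype.expect_eq_sum_div_card, Fintype.card_fun,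
    Fintype.card_bool, Fintype.card_fin]
  push_cast
  ring

lemma chi_half (S : Finset (Fin n)) (x : Fin n → Bool) :
    chi (1/2) S x = ∏ i ∈ S, if x i then 1 else -1 := by
  have hsd : Real.sqrt (1/2 * (1 - 1/2)) = 1/2 := by
    rw [show (1 : ℝ)/2 * (1 - 1/2) = (1/2) ^ 2 by norm_num, Real.sqrt_sq (by norm_num)]
  refine prod_congr rfl fun i _ => ?_
  rw [hsd]
  split <;> norm_num

lemma chi_half_sq (S : Finset (Fin n)) (x : Fin n → Bool) : chi (1/2) S x ^ 2 = 1 := by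
  rw [chi_half, ← prod_pow]
  exact prod_eq_one fun i _ => by split <;> norm_num

lemma chi_half_singleton_update_not (i : Fin n) (x : Fin n → Bool) :
    chi (1/2) {i} (update x i (!x i)) = -chi (1/2) {i} x := by
  rw [chi_half, chi_half, prod_singleton, prod_singleton, update_self]
  cases x i <;> norm_num

lemma chi_insert (p : ℝ) {i : Fin n} {S : Finset (Fin n)} (hi : i ∉ S) (x : Fin n → Bool) :
    chi p (insert i S) x = chi p {i} x * chi p S x := by
  rw [chi, prod_insert hi, chi, prod_singleton]
  rfl

lemma chi_update_of_notMem (p : ℝ) {i : Fin n} {S : Finset (Fin n)} (hi : i ∉ S)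
    (x : Fin n → Bool) (b : Bool) : chi p S (update x i b) = chi p S x :=
  prod_congr rfl fun j hj => by rw [update_of_ne (ne_of_mem_of_not_mem hj hi)]

lemma expect_chi_singleton_mul_eq_zero (i : Fin n) {g : (Fin n → Bool) → ℝ}
    (hg : ∀ x b, g (update x i b) = g x) : 𝔼 x, chi (1/2) {i} x * g x = 0 := by
  let flip : Equiv.Perm (Fin n → Bool) :=
    Involutive.toPerm (fun x => update x i (!x i)) fun x => by simp
  have hanti : 𝔼 x, chi (1/2) {i} x * g x = 𝔼 x, -(chi (1/2) {i} x * g x) :=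
    Fintype.expect_equiv flip _ _ fun x => by
      change _ = -(chi (1/2) {i} (update x i (!x i)) * g (update x i (!x i)))
      rw [chi_half_singleton_update_not, hg, neg_mul, neg_neg]
  rw [expect_neg_distrib] at hanti
  linarith

lemma expect_chi_mul_chi_of_mem_of_notMem {i : Fin n} {S T : Finset (Fin n)} (hiS : i ∈ S)
    (hiT : i ∉ T) : 𝔼 x, chi (1/2) S x * chi (1/2) T x = 0 := by
  have hS : ∀ x, chi (1/2) S x = chi (1/2) {i} x * chi (1/2) (S.erase i) x := fun x => by
    rw [← chi_insert _ (notMem_erase i S), insert_erase hiS]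
  simp only [hS, mul_assoc]
  exact expect_chi_singleton_mul_eq_zero i fun x b => by
    rw [chi_update_of_notMem _ (notMem_erase i S), chi_update_of_notMem _ hiT]

lemma expect_chi_mul_chi (S T : Finset (Fin n)) :
    𝔼 x, chi (1/2) S x * chi (1/2) T x = if S = T then 1 else 0 := by
  split_ifs with hST
  · simp only [hST, ← sq, chi_half_sq, Fintype.expect_const]
  obtain ⟨i, hi⟩ : ∃ i, ¬(i ∈ S ↔ i ∈ T) := by simpa [Finset.ext_iff] using hST
  by_cases hiS : i ∈ S
  · exact expect_chi_mul_chi_of_mem_of_notMem hiS (by tauto)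
  · simp only [mul_comm (chi _ S _)]
    exact expect_chi_mul_chi_of_mem_of_notMem (by tauto) hiS

lemma expect_sum_chi_mul_sum_chi (𝒮 : Finset (Finset (Fin n))) (a b : Finset (Fin n) → ℝ) :
    𝔼 x, (∑ S ∈ 𝒮, a S * chi (1/2) S x) * (∑ T ∈ 𝒮, b T * chi (1/2) T x) =
      ∑ S ∈ 𝒮, a S * b S := by
  simp_rw [sum_mul_sum, expect_sum_comm]
  refine sum_congr rfl fun S hS => ?_
  simp_rw [mul_mul_mul_comm (a S), ← mul_expect, expect_chi_mul_chi, mul_ite, mul_one, mul_zero]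
  rw [sum_ite_eq, if_pos hS]

lemma expect_add_chi_mul_pow_four (i : Fin n) {E D : (Fin n → Bool) → ℝ}
    (hE : ∀ x b, E (update x i b) = E x) (hD : ∀ x b, D (update x i b) = D x) :
    𝔼 x, (E x + chi (1/2) {i} x * D x) ^ 4 =
      𝔼 x, E x ^ 4 + 6 * 𝔼 x, E x ^ 2 * D x ^ 2 + 𝔼 x, D x ^ 4 := by
  have hexpand : ∀ x, (E x + chi (1/2) {i} x * D x) ^ 4 =
      E x ^ 4 + 6 * (E x ^ 2 * D x ^ 2) + D x ^ 4 +
        chi (1/2) {i} x * (4 * E x ^ 3 * D x + 4 * E x * D x ^ 3) := fun x => by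
    linear_combination (6 * E x ^ 2 * D x ^ 2 + 4 * E x * D x ^ 3 * chi (1/2) {i} x +
      D x ^ 4 * (chi (1/2) {i} x ^ 2 + 1)) * chi_half_sq {i} x
  have hodd : 𝔼 x, chi (1/2) {i} x * (4 * E x ^ 3 * D x + 4 * E x * D x ^ 3) = 0 :=
    expect_chi_singleton_mul_eq_zero i fun x b => by rw [hE, hD]
  simp only [hexpand, expect_add_distrib, ← mul_expect, hodd, add_zero]

lemma expect_sum_powerset_chi_pow_four_le (J : Finset (Fin n)) (a : Finset (Fin n) → ℝ) :
    𝔼 x, (∑ S ∈ J.powerset, a S * chi (1/2) S x) ^ 4 ≤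
      (∑ S ∈ J.powerset, 3 ^ S.card * a S ^ 2) ^ 2 := by
  induction J using Finset.induction_on generalizing a with
  | empty => simp [chi, ← pow_mul]
  | insert i J hi ih =>
    have hnot : ∀ S ∈ J.powerset, i ∉ S := fun S hS h => hi (mem_powerset.1 hS h)
    set E := fun x => ∑ S ∈ J.powerset, a S * chi (1/2) S x
    set D := fun x => ∑ S ∈ J.powerset, a (insert i S) * chi (1/2) S x
    set A := ∑ S ∈ J.powerset, 3 ^ S.card * a S ^ 2
    set B := ∑ S ∈ J.powerset, 3 ^ S.card * a (insert i S) ^ 2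
    have hsplit : ∀ x, ∑ S ∈ (insert i J).powerset, a S * chi (1/2) S x =
        E x + chi (1/2) {i} x * D x := fun x => by
      rw [sum_powerset_insert hi, mul_sum]
      refine congrArg _ (sum_congr rfl fun S hS => ?_)
      rw [chi_insert _ (hnot S hS)]
      ring
    have hweight : ∑ S ∈ (insert i J).powerset, 3 ^ S.card * a S ^ 2 = A + 3 * B := by
      rw [sum_powerset_insert hi, mul_sum]
      refine congrArg _ (sum_congr rfl fun S hS => ?_)
      rw [card_insert_of_notMem (hnot S hS), pow_succ]
      ring
    have hinv : ∀ (c : Finset (Fin n) → ℝ) x b,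
        ∑ S ∈ J.powerset, c S * chi (1/2) S (update x i b) =
          ∑ S ∈ J.powerset, c S * chi (1/2) S x := fun c x b =>
      sum_congr rfl fun S hS => by rw [chi_update_of_notMem _ (hnot S hS)]
    have hA : 0 ≤ A := sum_nonneg fun S _ => by positivity
    have hB : 0 ≤ B := sum_nonneg fun S _ => by positivity
    have hE4 : 𝔼 x, E x ^ 4 ≤ A ^ 2 := ih a
    have hD4 : 𝔼 x, D x ^ 4 ≤ B ^ 2 := ih _
    have hcross : 𝔼 x, E x ^ 2 * D x ^ 2 ≤ A * B := by
      have hcs : (𝔼 x, E x ^ 2 * D x ^ 2) ^ 2 ≤ (𝔼 x, E x ^ 4) * 𝔼 x, D x ^ 4 :=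
        (expect_mul_sq_le_sq_mul_sq univ (fun x => E x ^ 2) (fun x => D x ^ 2)).trans_eq
          (by simp only [← pow_mul])
      refine le_of_pow_le_pow_left₀ two_ne_zero (by positivity) (hcs.trans ?_)
      rw [mul_pow]
      exact mul_le_mul hE4 hD4 (expect_nonneg fun x _ => by positivity) (sq_nonneg A)
    simp only [hsplit, hweight]
    rw [expect_add_chi_mul_pow_four i (hinv a) (hinv _)]
    -- `A² + 6AB + B² ≤ (A + 3B)²`
    nlinarith

lemma expect_sum_chi_pow_four_le (𝒮 : Finset (Finset (Fin n))) (a : Finset (Fin n) → ℝ) :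
    𝔼 x, (∑ S ∈ 𝒮, a S * chi (1/2) S x) ^ 4 ≤ (∑ S ∈ 𝒮, 3 ^ S.card * a S ^ 2) ^ 2 := by
  have := expect_sum_powerset_chi_pow_four_le univ (fun S => if S ∈ 𝒮 then a S else 0)
  simpa only [powerset_univ, ite_mul, zero_mul, ite_pow, mul_ite, mul_zero, sum_ite_mem,
    univ_inter, ne_eq, OfNat.ofNat_ne_zero, not_false_eq_true, zero_pow] using this

end Cube

lemma expect_mul_pow_four_le_of_boolean {ι : Type*} [Fintype ι] (g f : ι → ℝ)
    (hf : ∀ x, f x = 0 ∨ f x = 1) :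
    (𝔼 x, g x * f x) ^ 4 ≤ (𝔼 x, g x ^ 4) * (𝔼 x, f x) ^ 3 := by
  have hff : ∀ x, f x ^ 2 = f x := fun x => by rcases hf x with h | h <;> simp [h]
  have h₁ : (𝔼 x, g x * f x) ^ 2 ≤ (𝔼 x, g x ^ 2 * f x) * 𝔼 x, f x := by
    have := expect_mul_sq_le_sq_mul_sq univ (fun x => g x * f x) f
    simp only [mul_assoc, ← sq, mul_pow, hff] at this
    exact this
  have h₂ : (𝔼 x, g x ^ 2 * f x) ^ 2 ≤ (𝔼 x, g x ^ 4) * 𝔼 x, f x := by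
    have := expect_mul_sq_le_sq_mul_sq univ (fun x => g x ^ 2) f
    simp only [← pow_mul, hff] at this
    exact this
  calc (𝔼 x, g x * f x) ^ 4 = ((𝔼 x, g x * f x) ^ 2) ^ 2 := by ring
    _ ≤ ((𝔼 x, g x ^ 2 * f x) * 𝔼 x, f x) ^ 2 := by gcongr
    _ = (𝔼 x, g x ^ 2 * f x) ^ 2 * (𝔼 x, f x) ^ 2 := by ring
    _ ≤ ((𝔼 x, g x ^ 4) * 𝔼 x, f x) * (𝔼 x, f x) ^ 2 := by gcongr
    _ = (𝔼 x, g x ^ 4) * (𝔼 x, f x) ^ 3 := by ring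

lemma le_mul_rpow_three_halves_of_pow_four_le {m μ C : ℝ} (hm : 0 ≤ m) (hμ : 0 ≤ μ) (hC : 0 ≤ C)
    (h : m ^ 4 ≤ (C * m) ^ 2 * μ ^ 3) : m ≤ C * μ ^ ((3 : ℝ) / 2) := by
  rcases hm.eq_or_lt with rfl | hm
  · positivity
  have hμ3 : (μ ^ ((3 : ℝ) / 2)) ^ 2 = μ ^ 3 := by
    rw [← Real.rpow_natCast, ← Real.rpow_mul hμ]
    norm_num
  refine le_of_pow_le_pow_left₀ two_ne_zero (by positivity) ?_
  rw [mul_pow, hμ3]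
  nlinarith [pow_pos hm 2]

theorem stmt10_general {n : ℕ} (f : (Fin n → Bool) → ℝ) (hBool : ∀ x, f x = 0 ∨ f x = 1)
    (r : ℕ) :
    cubeE (1/2) (fun x => (trunc (1/2) f r x) ^ 2) ≤
      3 ^ r * (cubeE (1/2) f) ^ ((3 : ℝ) / 2) := by
  set m := ∑ S ∈ univ.filter (fun T : Finset (Fin n) => T.card ≤ r), fhat (1/2) f S ^ 2
  have hfhat : ∀ S, fhat (1/2) f S = 𝔼 x, f x * chi (1/2) S x := fun S => cubeE_half _
  have hμ : 0 ≤ 𝔼 x, f x := expect_nonneg fun x _ => by rcases hBool x with h | h <;> simp [h]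
  have htrunc_sq : 𝔼 x, trunc (1/2) f r x ^ 2 = m := by
    simp only [trunc, sq, expect_sum_chi_mul_sum_chi, m]
  have htrunc_mul : 𝔼 x, trunc (1/2) f r x * f x = m := by
    simp only [trunc, sum_mul, expect_sum_comm, mul_assoc, ← mul_expect, mul_comm (chi _ _ _),
      ← hfhat, ← sq, m]
  have hlevel : ∑ S ∈ univ.filter (fun T : Finset (Fin n) => T.card ≤ r),
      3 ^ S.card * fhat (1/2) f S ^ 2 ≤ 3 ^ r * m := by
    rw [mul_sum]
    gcongr with S hS
    · norm_num
    · exact (mem_filter.1 hS).2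
  have hbonami : 𝔼 x, trunc (1/2) f r x ^ 4 ≤ (3 ^ r * m) ^ 2 :=
    (expect_sum_chi_pow_four_le _ _).trans (by gcongr)
  rw [cubeE_half, cubeE_half, htrunc_sq]
  refine le_mul_rpow_three_halves_of_pow_four_le (sum_nonneg fun S _ => sq_nonneg _) hμ
    (by positivity) ?_
  calc m ^ 4 = (𝔼 x, trunc (1/2) f r x * f x) ^ 4 := by rw [htrunc_mul]
    _ ≤ (𝔼 x, trunc (1/2) f r x ^ 4) * (𝔼 x, f x) ^ 3 :=
      expect_mul_pow_four_le_of_boolean _ _ hBool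
    _ ≤ (3 ^ r * m) ^ 2 * (𝔼 x, f x) ^ 3 := by gcongr

theorem stmt10 {n : ℕ} (f : (Fin n → Bool) → ℝ) (hBool : ∀ x, f x = 0 ∨ f x = 1)
    (r : ℕ) (hr : 0 < r) :
    cubeE (1/2) (fun x => (trunc (1/2) f r x) ^ 2) ≤
      3 ^ r * (cubeE (1/2) f) ^ ((3 : ℝ) / 2) :=
  stmt10_general f hBool r
end

section
/- Let $0<p<q<1$ and $\rho=\frac{p(1-q)}{q(1-p)}$. Let $D(p,q)$ be the unique distribution on pairs $(\mathbf{x},\mathbf{y})\in\{0,1\}^n\times\{0,1\}^n$ with $\mathbf{x}\sim\mu_p$, $\mathbf{y}\sim\mu_q$, $\mathbf{x}_i\le\mathbf{y}_i$ for all $i$, and independent coordinate pairs. Define $\mathrm{T}^{p\to q}:L^2(\mu_p)\to L^2(\mu_q)$ by $(\mathrm{T}^{p\to q}f)(y)=\mathbb{E}[f(\mathbf{x})\mid\mathbf{y}=y]$, with adjoint $\mathrm{T}^{q\to p}$. Then $(\mathrm{T}^{p\to q})^\star\,\mathrm{T}^{p\to q}=\mathrm{T}_\rho$ on $L^2(\{0,1\}^n,\mu_p)$,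 where $\mathrm{T}_\rho$ is the standard $p$-biased noise operator. -/
open Finset

/-- The conditional law of `x` given `y` under the monotone coupling `D(p,q)`:
`downK p q a b = ℙ(x = a ∣ y = b)`. -/
noncomputable def downK (p q : ℝ) : Bool → Bool → ℝ
  | true, true => p / q
  | false, true => 1 - p / q
  | true, false => 0
  | false, false => 1

/-- The conditional law of `y` given `x` under the monotone coupling `D(p,q)`:
`upK p q b a = ℙ(y = b ∣ x = a)`. -/
noncomputable def upK (p q : ℝ) : Bool → Bool → ℝ
  | true, true => 1
  | false, true => 0
  | true, false => (q - p) / (1 - p)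
  | false, false => (1 - q) / (1 - p)

/-- The directed operator `T^{p→q} : L²(μ_p) → L²(μ_q)`,
`(T^{p→q} f)(y) = E[f(x) ∣ y]` for `(x,y) ∼ D(p,q)`. -/
noncomputable def Tpq {n : ℕ} (p q : ℝ) (f : (Fin n → Bool) → ℝ) :
    (Fin n → Bool) → ℝ :=
  fun y => ∑ x : Fin n → Bool, (∏ i, downK p q (x i) (y i)) * f x

/-- The adjoint directed operator `T^{q→p} = (T^{p→q})⋆`,
`(T^{q→p} g)(x) = E[g(y) ∣ x]` for `(x,y) ∼ D(p,q)`. -/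
noncomputable def Tqp {n : ℕ} (p q : ℝ) (g : (Fin n → Bool) → ℝ) :
    (Fin n → Bool) → ℝ :=
  fun x => ∑ y : Fin n → Bool, (∏ i, upK p q (y i) (x i)) * g y

/-- The one-bit kernel of the `p`-biased noise operator `T_ρ`:
`noiseK ρ p b a = ℙ(y = b ∣ x = a)` where `y = x` with probability `ρ` and
otherwise `y` is resampled `p`-biased. -/
noncomputable def noiseK (ρ p : ℝ) : Bool → Bool → ℝ :=
  fun b a => ρ * (if b = a then 1 else 0) + (1 - ρ) * (if b then p else 1 - p)

/-- The `p`-biased noise operator `T_ρ`. -/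
noncomputable def Tnoise {n : ℕ} (ρ p : ℝ) (f : (Fin n → Bool) → ℝ) :
    (Fin n → Bool) → ℝ :=
  fun x => ∑ y : Fin n → Bool, (∏ i, noiseK ρ p (y i) (x i)) * f y

lemma oneBit (p q : ℝ) (hp0 : 0 < p) (hpq : p < q) (hq1 : q < 1) (a c : Bool) :
    ∑ b : Bool, upK p q b a * downK p q c b
      = noiseK (p * (1 - q) / (q * (1 - p))) p c a := by
  have hq0 : (0:ℝ) < q := hp0.trans hpq
  have hp1 : p < 1 := hpq.trans hq1
  have h1 : q ≠ 0 := ne_of_gt hq0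
  have h2 : (1:ℝ) - p ≠ 0 := by linarith
  cases a <;> cases c <;>
    simp [upK, downK, noiseK, Fintype.sum_bool] <;> field_simp <;> ring

theorem stmt13 {n : ℕ} (p q : ℝ) (hp0 : 0 < p) (hpq : p < q) (hq1 : q < 1) :
    ∀ f : (Fin n → Bool) → ℝ,
      Tqp p q (Tpq p q f) = Tnoise (p * (1 - q) / (q * (1 - p))) p f := by
  intro f
  funext x
  simp only [Tqp, Tpq, Tnoise, Finset.mul_sum]
  rw [Finset.sum_comm]
  refine Finset.sum_congr rfl fun z _ => ?_
  calc ∑ y : Fin n → Bool, (∏ i, upK p q (y i) (x i)) * ((∏ i, downK p q (z i) (y i)) * f z)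
      = (∑ y : Fin n → Bool, ∏ i, upK p q (y i) (x i) * downK p q (z i) (y i)) * f z := by
        rw [Finset.sum_mul]
        exact Finset.sum_congr rfl fun y _ => by rw [← mul_assoc, ← Finset.prod_mul_distrib]
    _ = (∏ i, ∑ b : Bool, upK p q b (x i) * downK p q (z i) b) * f z := by
        rw [Fintype.prod_sum]
    _ = (∏ i, noiseK (p * (1 - q) / (q * (1 - p))) p (z i) (x i)) * f z := by
        rw [Finset.prod_congr rfl fun i _ => oneBit p q hp0 hpq hq1 (x i) (z i)]
end

section
/- Let $n,k\in\mathbb{N}$ with $k=pn\le n$. Then $\mathbb{P}(\mathrm{Bin}(n,p)\ge k)\ge 1/4$. Consequently, for any family $\mathcal{A}\subset\binom{[n]}{k}$ with uniform density $\mu(\mathcal{A})=|\mathcal{A}|/\binom{n}{k}$, the up-closure $\mathcal{A}^\uparrow=\{B\subset[n]:A\subset B\text{ for some }A\in\mathcal{A}\}$ satisfies $\mu_p(\mathcal{A}^\uparrow)\ge\mu(\mathcal{A})/4$. -/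
/-!
Write `X ~ Bin(n, p)` with `p = k / n` and `a = n - k`, and let `d = ⌊√(2a + 1)⌋ + 1` (or `k`
if that is smaller). Split `{0, …, n}` into the lower tail `j < k - d`, the window `k - d ≤ j < k`
and the upper part `j ≥ k`. Reflecting the window about `k - 1/2` sends `P(X = k - 1 - i)` to
`P(X = k + i)`, which is at least as large as long as `i² ≤ 2a + 1`; so the window has mass at
most `P(X ≥ k)`. The lower tail lies at distance at least `d + 1` from the mean, so by Chebyshev
its mass is at most `ka / (n (d + 1)²) ≤ 1/2`. Hence `1 ≤ 1/2 + 2 P(X ≥ k)`.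

For the second claim, the `j`-th layer of `𝒜↑` contains the `(j - k)`-fold upper shadow of `𝒜`,
whose density in that layer is at least `μ(𝒜)` by the upward local LYM inequality (the downward one
applied to complements). Summing over the layers gives `μ_p(𝒜↑) ≥ μ(𝒜) P(X ≥ k)`.
-/

open Finset
open scoped FinsetFamily

theorem Finset.sum_Ico_sub_le_sum_Ico_add {M : Type*} [AddCommMonoid M] [PartialOrder M]
    [IsOrderedAddMonoid M] (f : ℕ → M) {k d : ℕ} (hd : d ≤ k)
    (h : ∀ i < d, f (k - 1 - i) ≤ f (k + i)) :
    ∑ j ∈ Ico (k - d) k, f j ≤ ∑ j ∈ Ico k (k + d), f j := by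
  rw [sum_Ico_eq_sum_range, sum_Ico_eq_sum_range, ← sum_range_reflect,
    Nat.sub_sub_self hd, Nat.add_sub_cancel_left]
  refine sum_le_sum fun i hi => ?_
  rw [show k - d + (d - 1 - i) = k - 1 - i by have := mem_range.1 hi; omega]
  exact h i (mem_range.1 hi)

/-- The ratio of the right side to the left side is `(a + 1) / a ≥ 1` at `i = 0`, and it does not
decrease from `i` to `i + 1` as long as `(i + 1)² ≤ 2a + 1`. -/
theorem Nat.choose_sub_mul_pow_le_choose_add_mul_pow {k a i : ℕ} (hik : i < k) (hia : i ≤ a)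
    (hi : i * i ≤ 2 * a + 1) :
    (k + a).choose (k - 1 - i) * a ^ (2 * i + 1) ≤ (k + a).choose (k + i) * k ^ (2 * i + 1) := by
  induction i with
  | zero =>
    obtain ⟨K, rfl⟩ : ∃ K, k = K + 1 := ⟨k - 1, by omega⟩
    have h := Nat.choose_succ_right_eq (K + 1 + a) K
    rw [show K + 1 + a - K = a + 1 by omega] at h
    simp only [Nat.add_sub_cancel, Nat.sub_zero, add_zero, mul_zero, zero_add, pow_one, h]
    exact Nat.mul_le_mul_left _ (by omega)
  | succ i ih =>
    obtain ⟨K, rfl⟩ : ∃ K, k = K + i + 2 := ⟨k - i - 2, by omega⟩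
    obtain ⟨A, rfl⟩ : ∃ A, a = A + i + 1 := ⟨a - i - 1, by omega⟩
    have IH := ih (by omega) (by omega) (by nlinarith)
    set n := K + i + 2 + (A + i + 1)
    rw [show K + i + 2 - 1 - i = K + 1 by omega, show K + i + 2 + i = K + 2 * i + 2 by omega] at IH
    rw [show K + i + 2 - 1 - (i + 1) = K by omega,
      show K + i + 2 + (i + 1) = K + 2 * i + 3 by omega]
    have hhi : n.choose (K + 2 * i + 3) * (K + 2 * i + 3) = n.choose (K + 2 * i + 2) * (A + 1) := by
      rw [Nat.choose_succ_right_eq, show n - (K + 2 * i + 2) = A + 1 by omega]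
    have hlo : n.choose (K + 1) * (K + 1) = n.choose K * (A + 2 * i + 3) := by
      rw [Nat.choose_succ_right_eq, show n - K = A + 2 * i + 3 by omega]
    have hratio : (A + i + 1) ^ 2 * ((K + 1) * (K + 2 * i + 3))
        ≤ (K + i + 2) ^ 2 * ((A + 1) * (A + 2 * i + 3)) := by
      nlinarith [Nat.mul_le_mul_right ((K + i + 2) ^ 2) hi]
    refine Nat.le_of_mul_le_mul_right (c := (K + 2 * i + 3) * (A + 2 * i + 3)) ?_ (by positivity)
    calc n.choose K * (A + i + 1) ^ (2 * (i + 1) + 1) * ((K + 2 * i + 3) * (A + 2 * i + 3))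
        = n.choose (K + 1) * (K + 1) * ((A + i + 1) ^ (2 * (i + 1) + 1) * (K + 2 * i + 3)) := by
          rw [hlo]; ring
      _ = n.choose (K + 1) * (A + i + 1) ^ (2 * i + 1) *
            ((A + i + 1) ^ 2 * ((K + 1) * (K + 2 * i + 3))) := by ring
      _ ≤ n.choose (K + 2 * i + 2) * (K + i + 2) ^ (2 * i + 1) *
            ((K + i + 2) ^ 2 * ((A + 1) * (A + 2 * i + 3))) := Nat.mul_le_mul IH hratio
      _ = n.choose (K + 2 * i + 3) * (K + 2 * i + 3) *
            ((K + i + 2) ^ (2 * (i + 1) + 1) * (A + 2 * i + 3)) := by rw [hhi]; ring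
      _ = n.choose (K + 2 * i + 3) * (K + i + 2) ^ (2 * (i + 1) + 1) *
            ((K + 2 * i + 3) * (A + 2 * i + 3)) := by ring

def binomTerm (n : ℕ) (p : ℝ) (j : ℕ) : ℝ := n.choose j * p ^ j * (1 - p) ^ (n - j)

namespace binomTerm

variable {n : ℕ} {p : ℝ}

theorem nonneg (hp0 : 0 ≤ p) (hp1 : p ≤ 1) (j : ℕ) : 0 ≤ binomTerm n p j := by
  have : 0 ≤ 1 - p := by linarith
  unfold binomTerm; positivity

theorem eq_eval_bernsteinPolynomial (j : ℕ) :
    binomTerm n p j = (bernsteinPolynomial ℝ n j).eval p := by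
  simp [binomTerm, bernsteinPolynomial]

theorem sum_range : ∑ j ∈ range (n + 1), binomTerm n p j = 1 := by
  simpa [eq_eval_bernsteinPolynomial, Polynomial.eval_finsetSum] using
    congrArg (Polynomial.eval p) (bernsteinPolynomial.sum ℝ n)

theorem sum_range_sq_mul :
    ∑ j ∈ range (n + 1), (n * p - j) ^ 2 * binomTerm n p j = n * p * (1 - p) := by
  simpa [eq_eval_bernsteinPolynomial, Polynomial.eval_finsetSum, nsmul_eq_mul, mul_assoc] using
    congrArg (Polynomial.eval p) (bernsteinPolynomial.variance ℝ n)

theorem sq_mul_sum_range_le (hp0 : 0 ≤ p) (hp1 : p ≤ 1) {c : ℕ} (hc : c ≤ n + 1) {t : ℝ}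
    (ht0 : 0 ≤ t) (ht : ∀ j < c, t ≤ n * p - j) :
    t ^ 2 * ∑ j ∈ range c, binomTerm n p j ≤ n * p * (1 - p) := by
  rw [← sum_range_sq_mul, mul_sum]
  calc ∑ j ∈ range c, t ^ 2 * binomTerm n p j
      ≤ ∑ j ∈ range c, (n * p - j) ^ 2 * binomTerm n p j := by
        gcongr with j hj
        · exact nonneg hp0 hp1 j
        · exact ht j (mem_range.1 hj)
    _ ≤ ∑ j ∈ range (n + 1), (n * p - j) ^ 2 * binomTerm n p j :=
        sum_le_sum_of_subset_of_nonneg (range_subset_range.2 hc)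
          fun j _ _ => mul_nonneg (sq_nonneg _) (nonneg hp0 hp1 j)

theorem le_add_of_choose_mul_pow_le (hp0 : 0 ≤ p) (hp1 : p ≤ 1) {j d : ℕ} (hjd : j + d ≤ n)
    (h : (n.choose j : ℝ) * (1 - p) ^ d ≤ n.choose (j + d) * p ^ d) :
    binomTerm n p j ≤ binomTerm n p (j + d) := by
  have hw : 0 ≤ p ^ j * (1 - p) ^ (n - (j + d)) := by
    have : 0 ≤ 1 - p := by linarith
    positivity
  calc binomTerm n p j = n.choose j * (1 - p) ^ d * (p ^ j * (1 - p) ^ (n - (j + d))) := by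
        rw [binomTerm, show n - j = d + (n - (j + d)) by omega, pow_add]; ring
    _ ≤ n.choose (j + d) * p ^ d * (p ^ j * (1 - p) ^ (n - (j + d))) := by gcongr
    _ = binomTerm n p (j + d) := by rw [binomTerm, pow_add]; ring


theorem le_reflect (hp0 : 0 ≤ p) (hp1 : p ≤ 1) {k a i : ℕ} (hk : (k : ℝ) = p * (k + a))
    (hik : i < k) (hia : i ≤ a) (hi : i * i ≤ 2 * a + 1) :
    binomTerm (k + a) p (k - 1 - i) ≤ binomTerm (k + a) p (k + i) := by
  have hn : (0 : ℝ) < k + a := by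
    have : 0 < k := by omega
    positivity
  have hp : p = k / (k + a) := by rw [eq_div_iff hn.ne', ← hk]
  have hq : 1 - p = a / (k + a) := by rw [eq_div_iff hn.ne']; linarith
  have hjd : k - 1 - i + (2 * i + 1) = k + i := by omega
  rw [← hjd]
  refine le_add_of_choose_mul_pow_le hp0 hp1 (by omega) ?_
  rw [hjd, hq, hp, div_pow, div_pow, ← mul_div_assoc, ← mul_div_assoc]
  refine div_le_div_of_nonneg_right ?_ (by positivity)
  exact_mod_cast Nat.choose_sub_mul_pow_le_choose_add_mul_pow hik hia hi

end binomTerm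

theorem quarter_le_sum_Icc_binomTerm {n k : ℕ} {p : ℝ} (hp0 : 0 ≤ p) (hp1 : p ≤ 1)
    (hk : (k : ℝ) = p * n) (hkn : k ≤ n) :
    1 / 4 ≤ ∑ j ∈ Icc k n, binomTerm n p j := by
  obtain ⟨a, rfl⟩ : ∃ a, n = k + a := ⟨n - k, by omega⟩
  rcases Nat.eq_zero_or_pos a with rfl | ha
  · have hpk : p ^ k = 1 := by
      rcases Nat.eq_zero_or_pos k with rfl | hk0
      · simp
      · have : (k : ℝ) ≠ 0 := by positivity
        rw [show p = 1 by simpa using (mul_eq_right₀ this).1 hk.symm, one_pow]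
    norm_num [binomTerm, hpk]
  push_cast at hk
  set m := Nat.sqrt (2 * a + 1)
  have hm_sq : m * m ≤ 2 * a + 1 := Nat.sqrt_le (2 * a + 1)
  have hm_lt : 2 * a + 1 < (m + 1) * (m + 1) := Nat.lt_succ_sqrt (2 * a + 1)
  have hma : m ≤ a := by nlinarith
  set d := min k (m + 1)
  have hsplit : ∑ j ∈ range (k - d), binomTerm (k + a) p j
      + ∑ j ∈ Ico (k - d) k, binomTerm (k + a) p j
      + ∑ j ∈ Icc k (k + a), binomTerm (k + a) p j = 1 := by
    rw [sum_range_add_sum_Ico _ (by omega), ← Ico_add_one_right_eq_Icc,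
      sum_range_add_sum_Ico _ (by omega), binomTerm.sum_range]
  have hmid : ∑ j ∈ Ico (k - d) k, binomTerm (k + a) p j
      ≤ ∑ j ∈ Icc k (k + a), binomTerm (k + a) p j := by
    refine (sum_Ico_sub_le_sum_Ico_add _ (by omega) fun i hi => ?_).trans ?_
    · exact binomTerm.le_reflect hp0 hp1 hk (by omega) (by omega)
        ((Nat.mul_self_le_mul_self (by omega)).trans hm_sq)
    · rw [← Ico_add_one_right_eq_Icc]
      exact sum_le_sum_of_subset_of_nonneg (Ico_subset_Ico_right (by omega))
        fun j _ _ => binomTerm.nonneg hp0 hp1 j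
  have hlow : ∑ j ∈ range (k - d), binomTerm (k + a) p j ≤ 1 / 2 := by
    have hcheb := binomTerm.sq_mul_sum_range_le (n := k + a) hp0 hp1 (c := k - d) (by omega)
      (t := m + 2) (by positivity) fun j hj => by
        have : (j : ℝ) + (m + 2) ≤ k := by exact_mod_cast (show j + (m + 2) ≤ k by omega)
        push_cast; linarith
    have hvar : ((k + a : ℕ) : ℝ) * p * (1 - p) ≤ a := by push_cast; nlinarith
    have hm2 : (2 * a : ℝ) < (m + 2) ^ 2 := by
      have : ((2 * a + 1 : ℕ) : ℝ) < ((m + 1) * (m + 1) : ℕ) := by exact_mod_cast hm_lt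
      push_cast at this; nlinarith
    nlinarith
  linarith

section

variable {α : Type*} [DecidableEq α] [Fintype α] {𝒜 : Finset (Finset α)} {r : ℕ}

theorem card_div_choose_le_card_upShadow_div_choose (hr : r < Fintype.card α)
    (h𝒜 : (𝒜 : Set (Finset α)).Sized r) :
    (#𝒜 : ℝ) / (Fintype.card α).choose r ≤ #(∂⁺ 𝒜) / (Fintype.card α).choose (r + 1) := by
  set N := Fintype.card α
  have hsized : (𝒜ᶜˢ : Set (Finset α)).Sized (N - r) := fun s hs => by
    rw [mem_coe, mem_compls] at hs
    rw [← h𝒜 hs, card_compl, Nat.sub_sub_self (card_le_univ s)]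
  have h := card_div_choose_le_card_shadow_div_choose (𝕜 := ℝ) (by omega) hsized
  rwa [shadow_compls, card_compls, card_compls, Nat.choose_symm (by omega),
    show N - r - 1 = N - (r + 1) by omega, Nat.choose_symm (by omega)] at h

theorem card_div_choose_le_card_upShadow_iterate_div_choose (h𝒜 : (𝒜 : Set (Finset α)).Sized r)
    {i : ℕ} (hi : r + i ≤ Fintype.card α) :
    (#𝒜 : ℝ) / (Fintype.card α).choose r ≤
      #(∂⁺^[i] 𝒜) / (Fintype.card α).choose (r + i) := by
  induction i with
  | zero => rfl
  | succ i ih =>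
    have hsized : ((∂⁺^[i] 𝒜 : Finset (Finset α)) : Set (Finset α)).Sized (r + i) := by
      intro t ht
      obtain ⟨s, hs, hst, hcard⟩ := mem_upShadow_iterate_iff_exists_sdiff.1 ht
      rw [← h𝒜 hs, ← hcard, card_sdiff_of_subset hst, Nat.add_sub_of_le (card_le_card hst)]
    rw [Function.iterate_succ_apply']
    exact (ih (by omega)).trans
      (card_div_choose_le_card_upShadow_div_choose (by omega) hsized)

def upClosure (𝒜 : Finset (Finset α)) : Finset (Finset α) := {B | ∃ A ∈ 𝒜, A ⊆ B}

theorem card_div_choose_le_card_upClosure_filter_div_choose (h𝒜 : (𝒜 : Set (Finset α)).Sized r)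
    {j : ℕ} (hrj : r ≤ j) (hj : j ≤ Fintype.card α) :
    (#𝒜 : ℝ) / (Fintype.card α).choose r ≤
      #{B ∈ upClosure 𝒜 | #B = j} / (Fintype.card α).choose j := by
  have hsub : ∂⁺^[j - r] 𝒜 ⊆ {B ∈ upClosure 𝒜 | #B = j} := fun B hB => by
    obtain ⟨A, hA, hAB, hcard⟩ := mem_upShadow_iterate_iff_exists_sdiff.1 hB
    simp only [upClosure, mem_filter, mem_univ, true_and]
    refine ⟨⟨A, hA, hAB⟩, ?_⟩
    rw [card_sdiff_of_subset hAB, h𝒜 hA] at hcard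
    have := card_le_card hAB
    rw [h𝒜 hA] at this
    omega
  calc (#𝒜 : ℝ) / (Fintype.card α).choose r
      ≤ #(∂⁺^[j - r] 𝒜) / (Fintype.card α).choose (r + (j - r)) :=
        card_div_choose_le_card_upShadow_iterate_div_choose h𝒜 (by omega)
    _ ≤ #{B ∈ upClosure 𝒜 | #B = j} / (Fintype.card α).choose j := by
        rw [Nat.add_sub_cancel' hrj]
        gcongr

theorem card_div_choose_mul_sum_Icc_binomTerm_le (h𝒜 : (𝒜 : Set (Finset α)).Sized r) {p : ℝ}
    (hp0 : 0 ≤ p) (hp1 : p ≤ 1) :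
    (#𝒜 : ℝ) / (Fintype.card α).choose r *
        ∑ j ∈ Icc r (Fintype.card α), binomTerm (Fintype.card α) p j ≤
      ∑ B ∈ upClosure 𝒜, p ^ #B * (1 - p) ^ (Fintype.card α - #B) := by
  set N := Fintype.card α
  have hcard : ∀ B ∈ upClosure 𝒜, #B ∈ Icc r N := fun B hB => by
    simp only [upClosure, mem_filter, mem_univ, true_and] at hB
    obtain ⟨A, hA, hAB⟩ := hB
    exact mem_Icc.2 ⟨h𝒜 hA ▸ card_le_card hAB, card_le_univ B⟩
  rw [← sum_fiberwise_of_maps_to hcard, mul_sum]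
  refine sum_le_sum fun j hj => ?_
  obtain ⟨hrj, hjN⟩ := mem_Icc.1 hj
  have hlevel := card_div_choose_le_card_upClosure_filter_div_choose h𝒜 hrj hjN
  calc (#𝒜 : ℝ) / N.choose r * binomTerm N p j
      = #𝒜 / N.choose r * N.choose j * (p ^ j * (1 - p) ^ (N - j)) := by
        rw [binomTerm]; ring
    _ ≤ #{B ∈ upClosure 𝒜 | #B = j} * (p ^ j * (1 - p) ^ (N - j)) := by
        gcongr
        rwa [le_div_iff₀ (by exact_mod_cast Nat.choose_pos hjN)] at hlevel
    _ = ∑ B ∈ upClosure 𝒜 with #B = j, p ^ #B * (1 - p) ^ (N - #B) := by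
        rw [sum_congr rfl fun B hB => by rw [(mem_filter.1 hB).2], sum_const, nsmul_eq_mul]

end

theorem stmt15 {n k : ℕ} (p : ℝ) (hp0 : 0 ≤ p) (hp1 : p ≤ 1)
    (hk : (k : ℝ) = p * n) (hkn : k ≤ n)
    (𝒜 : Finset (Finset (Fin n))) (h𝒜 : ∀ A ∈ 𝒜, A.card = k) :
    (1 / 4 : ℝ) ≤ ∑ j ∈ Finset.Icc k n, (n.choose j : ℝ) * p ^ j * (1 - p) ^ (n - j) ∧
    ((𝒜.card : ℝ) / (n.choose k)) / 4 ≤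
      ∑ B ∈ Finset.univ.filter (fun B : Finset (Fin n) => ∃ A ∈ 𝒜, A ⊆ B),
        p ^ B.card * (1 - p) ^ (n - B.card) := by
  have hquarter := quarter_le_sum_Icc_binomTerm hp0 hp1 hk hkn
  refine ⟨hquarter, ?_⟩
  have hup := card_div_choose_mul_sum_Icc_binomTerm_le (fun A hA => h𝒜 A hA) hp0 hp1
  rw [Fintype.card_fin] at hup
  calc (#𝒜 : ℝ) / n.choose k / 4 = #𝒜 / n.choose k * (1 / 4) := by ring
    _ ≤ #𝒜 / n.choose k * ∑ j ∈ Icc k n, binomTerm n p j := by gcongr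
    _ ≤ _ := hup
end

section
/- Let $1\le m\le s$, $k_1,\ldots,k_s\ge 0$ integers and $n\ge\sum_{i\in[s]}k_i$. Suppose $\mathcal{F}_i\subset\binom{[n]}{k_i}$ satisfy $\mu(\mathcal{F}_i)>2k_im/n$ for $i\in[m]$ and $\mu(\mathcal{F}_i)>2k_is/n$ for $i\in[m+1,s]$. Then $\mathcal{F}_1,\ldots,\mathcal{F}_s$ cross contain a matching, i.e., there exist pairwise disjoint sets $A_1,\ldots,A_s$ with $A_i\in\mathcal{F}_i$ for every $i$. -/
/-!
Compressing all families at once along a pair `a < b` (replace `b` by `a` where possible) keeps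
their sizes, uniformity and densities, and a cross matching of the compressed families lifts back
by swapping `a` and `b` in every chosen set. So the families may be assumed shifted, and then a
family contains every set `E` of the size of a member `A` such that, for every `j`, `E` has at
least as many elements below `j` as `A`.

A `k`-set is `q`-sparse if it has fewer than `j / q` elements below `j`, for every `j ≤ n`. By the
cycle lemma at least `n - q k` of the `n` rotations of any `k`-set are `q`-sparse, so a family of
density above `q k / n` has a sparse member, which lies above every staircase `{p 0, …, p (k-1)}`
with `p r < q (r + 1)`. For `q = 2m` (first `m` families) and `q = 2s` (the others) such
staircases fit disjointly: the even numbers for the first group, the odd ones for the second.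
-/

open Finset
open scoped FinsetFamily

section Compression

variable {α β : Type*} [GeneralizedBooleanAlgebra α] [DecidableRel (@Disjoint α _ _)]
  [DecidableLE α] [DecidableEq α] [AddCommMonoid β] {u v a : α} {s : Finset α} {f : α → β}

theorem UV.sum_compression :
    ∑ a ∈ 𝓒 u v s, f a = ∑ a ∈ s with UV.compress u v a ∈ s, f a
      + ∑ a ∈ s with UV.compress u v a ∉ s, f (UV.compress u v a) := by
  rw [UV.compression, sum_union UV.compress_disjoint, filter_image, sum_image UV.compress_injOn]

theorem UV.sum_compression_le [PartialOrder β] [IsOrderedCancelAddMonoid β]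
    (hf : ∀ a, f (UV.compress u v a) ≤ f a) :
    ∑ a ∈ 𝓒 u v s, f a ≤ ∑ a ∈ s, f a := by
  rw [UV.sum_compression, ← sum_filter_add_sum_filter_not s (UV.compress u v · ∈ s)]
  gcongr with a
  exact hf a

theorem UV.sum_compression_lt [PartialOrder β] [IsOrderedCancelAddMonoid β]
    (hf : ∀ a, f (UV.compress u v a) ≤ f a) (ha : a ∈ s) (hca : UV.compress u v a ∉ s)
    (hlt : f (UV.compress u v a) < f a) :
    ∑ a ∈ 𝓒 u v s, f a < ∑ a ∈ s, f a := by
  rw [UV.sum_compression, ← sum_filter_add_sum_filter_not s (UV.compress u v · ∈ s)]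
  exact add_lt_add_right (sum_lt_sum (fun b _ => hf b) ⟨a, mem_filter.2 ⟨ha, hca⟩, hlt⟩) _

end Compression

section CrossMatching

variable {ι α : Type*}

open Function in
def HasCrossMatching (F : ι → Finset (Finset α)) : Prop :=
  ∃ A : ι → Finset α, (∀ i, A i ∈ F i) ∧ Pairwise (Disjoint on A)

theorem HasCrossMatching.of_isEmpty [IsEmpty α] {F : ι → Finset (Finset α)}
    (hF : ∀ i, (F i).Nonempty) : HasCrossMatching F := by
  refine ⟨fun _ => ∅, fun i => ?_, fun _ _ _ => disjoint_empty_left _⟩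
  obtain ⟨A, hA⟩ := hF i
  rwa [eq_empty_of_isEmpty A] at hA

variable [DecidableEq α] {a b : α} {s : Finset α}

theorem Finset.map_swap_of_mem_of_notMem (ha : a ∈ s) (hb : b ∉ s) :
    s.map (Equiv.swap a b).toEmbedding = (s ⊔ {b}) \ {a} := by
  ext x
  simp only [mem_map_equiv, Equiv.symm_swap, Equiv.swap_apply_def, sup_eq_union, mem_sdiff,
    mem_union, mem_singleton]
  by_cases hxa : x = a <;> by_cases hxb : x = b <;> simp_all

theorem Finset.map_swap_of_notMem_of_notMem (ha : a ∉ s) (hb : b ∉ s) :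
    s.map (Equiv.swap a b).toEmbedding = s := by
  ext x
  simp only [mem_map_equiv, Equiv.symm_swap, Equiv.swap_apply_def]
  by_cases hxa : x = a <;> by_cases hxb : x = b <;> simp_all

/-- Swap `a` and `b` in every member: this undoes the compression on a member outside its family,
the only member containing `a`, and keeps the other members in their families. -/
theorem HasCrossMatching.of_compression {F : ι → Finset (Finset α)}
    (h : HasCrossMatching fun i => 𝓒 {a} {b} (F i)) : HasCrossMatching F := by
  obtain ⟨A, hAF, hA⟩ := h
  by_cases hall : ∀ i, A i ∈ F i
  · exact ⟨A, hall, hA⟩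
  obtain ⟨i, hi⟩ := not_forall.1 hall
  have hai : a ∈ A i :=
    singleton_subset_iff.1 (UV.le_of_mem_compression_of_notMem (hAF i) hi)
  have hbi : b ∉ A i :=
    disjoint_singleton_left.1 (UV.disjoint_of_mem_compression_of_notMem (hAF i) hi)
  refine ⟨fun l => (A l).map (Equiv.swap a b).toEmbedding, fun l => ?_,
    fun l l' hll' => (disjoint_map _).2 (hA hll')⟩
  dsimp only
  obtain rfl | hl := eq_or_ne l i
  · rw [map_swap_of_mem_of_notMem hai hbi]
    exact UV.sup_sdiff_mem_of_mem_compression_of_notMem (hAF l) hi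
  have hal : a ∉ A l := fun h => disjoint_left.1 (hA hl) h hai
  by_cases hbl : b ∈ A l
  · rw [Equiv.swap_comm, map_swap_of_mem_of_notMem hbl hal]
    exact UV.sup_sdiff_mem_of_mem_compression (hAF l) (singleton_subset_iff.2 hbl)
      (disjoint_singleton_left.2 hal)
  · rw [map_swap_of_notMem_of_notMem hal hbl]
    by_contra h
    exact hal (singleton_subset_iff.1 (UV.le_of_mem_compression_of_notMem (hAF l) h))

end CrossMatching

section Shifting

variable {n : ℕ}

def IsShifted (F : Finset (Finset (Fin n))) : Prop :=
  ∀ ⦃a b : Fin n⦄, a < b → ∀ A ∈ F, UV.compress {a} {b} A ∈ F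

theorem UV.compress_singleton_eq {α : Type*} [DecidableEq α] {a b : α} {A : Finset α}
    (ha : a ∉ A) (hb : b ∈ A) : UV.compress {a} {b} A = insert a (A.erase b) := by
  rw [UV.compress_of_disjoint_of_le (disjoint_singleton_left.2 ha) (singleton_subset_iff.2 hb)]
  ext x
  simp only [sup_eq_union, mem_sdiff, mem_union, mem_singleton, mem_insert, mem_erase]
  constructor
  · rintro ⟨hx | rfl, hxb⟩ <;> tauto
  · rintro (rfl | ⟨hxb, hx⟩)
    · exact ⟨Or.inr rfl, fun h => ha (h ▸ hb)⟩
    · exact ⟨Or.inl hx, hxb⟩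

theorem sum_val_compress_lt {a b : Fin n} (hab : a < b) {A : Finset (Fin n)}
    (hA : UV.compress {a} {b} A ≠ A) :
    ∑ x ∈ UV.compress {a} {b} A, (x : ℕ) < ∑ x ∈ A, (x : ℕ) := by
  have hab' : Disjoint {a} A ∧ {b} ≤ A := by
    by_contra h
    exact hA (if_neg h)
  have ha : a ∉ A := disjoint_singleton_left.1 hab'.1
  have hb : b ∈ A := singleton_subset_iff.1 hab'.2
  rw [UV.compress_singleton_eq ha hb, sum_insert fun h => ha (mem_of_mem_erase h),
    ← sum_erase_add A _ hb, add_comm]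
  exact Nat.add_lt_add_left hab _

theorem sum_val_compress_le {a b : Fin n} (hab : a < b) (A : Finset (Fin n)) :
    ∑ x ∈ UV.compress {a} {b} A, (x : ℕ) ≤ ∑ x ∈ A, (x : ℕ) := by
  by_cases hA : UV.compress {a} {b} A = A
  · rw [hA]
  · exact (sum_val_compress_lt hab hA).le

/-- Induction on the total weight `∑ i, ∑ A ∈ F i, ∑ x ∈ A, x`, which a compression along `a < b`
lowers unless the tuple is already shifted. -/
theorem hasCrossMatching_of_isShifted {ι : Type*} [Fintype ι]
    (P : (ι → Finset (Finset (Fin n))) → Prop)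
    (hP : ∀ F a b, a < b → P F → P fun i => 𝓒 {a} {b} (F i))
    (hshifted : ∀ F, P F → (∀ i, IsShifted (F i)) → HasCrossMatching F)
    (F : ι → Finset (Finset (Fin n))) (hF : P F) : HasCrossMatching F := by
  induction hw : ∑ i, ∑ A ∈ F i, ∑ x ∈ A, (x : ℕ) using Nat.strong_induction_on
    generalizing F with
  | _ w ih =>
  by_cases hsh : ∀ i, IsShifted (F i)
  · exact hshifted F hF hsh
  simp only [IsShifted, not_forall] at hsh
  obtain ⟨i, a, b, hab, A, hA, hcA⟩ := hsh
  refine HasCrossMatching.of_compression (ih _ ?_ _ (hP F a b hab hF) rfl)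
  rw [← hw]
  refine sum_lt_sum (fun j _ => UV.sum_compression_le (sum_val_compress_le hab))
    ⟨i, mem_univ _, UV.sum_compression_lt (sum_val_compress_le hab) hA hcA
      (sum_val_compress_lt hab fun h => hcA (by rwa [h]))⟩

end Shifting

section PrefixCount

variable {n : ℕ}

def prefixCount (B : Finset (Fin n)) (j : ℕ) : ℕ := #{x ∈ B | x.val < j}

theorem prefixCount_of_le {B : Finset (Fin n)} {j : ℕ} (hj : n ≤ j) : prefixCount B j = #B := by
  rw [prefixCount, filter_true_of_mem fun x _ => x.isLt.trans_le hj]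

theorem prefixCount_insert_erase {A : Finset (Fin n)} {a b : Fin n} {j : ℕ} (ha : a ∉ A)
    (hb : b ∈ A) (haj : (a : ℕ) < j) (hbj : (b : ℕ) < j) :
    prefixCount (insert a (A.erase b)) j = prefixCount A j := by
  have hb' : b ∈ {x ∈ A | x.val < j} := mem_filter.2 ⟨hb, hbj⟩
  have ha' : a ∉ ({x ∈ A | x.val < j}).erase b := fun h => ha (mem_filter.1 (mem_of_mem_erase h)).1
  rw [prefixCount, prefixCount, filter_insert, if_pos haj, filter_erase, card_insert_of_notMem ha',
    card_erase_add_one hb']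

theorem lt_of_forall_prefixCount_le {A E : Finset (Fin n)}
    (hdom : ∀ j, prefixCount A j ≤ prefixCount E j) {x y : Fin n} (hx : x ∈ E \ A)
    (hxmin : ∀ z ∈ E \ A, x ≤ z) (hy : y ∈ A \ E) : x < y := by
  obtain ⟨hxE, hxA⟩ := mem_sdiff.1 hx
  obtain ⟨hyA, hyE⟩ := mem_sdiff.1 hy
  refine lt_of_le_of_ne (not_lt.1 fun hyx => ?_) fun h => hxA (h ▸ hyA)
  have hsub : {z ∈ E | z.val < y.val + 1} ⊂ {z ∈ A | z.val < y.val + 1} := by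
    refine (ssubset_iff_of_subset fun z hz => ?_).2
      ⟨y, mem_filter.2 ⟨hyA, by omega⟩, fun h => hyE (mem_filter.1 h).1⟩
    obtain ⟨hzE, hzy⟩ := mem_filter.1 hz
    refine mem_filter.2 ⟨?_, hzy⟩
    by_contra hzA
    exact (hxmin z (mem_sdiff.2 ⟨hzE, hzA⟩)).not_gt
      (Fin.lt_def.2 (by have := Fin.lt_def.1 hyx; omega))
  exact (card_lt_card hsub).not_ge (hdom (y.val + 1))

theorem prefixCount_insert_erase_le {A E : Finset (Fin n)}
    (hdom : ∀ j, prefixCount A j ≤ prefixCount E j) {x y : Fin n} (hxE : x ∈ E) (hxA : x ∉ A)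
    (hyA : y ∈ A) (hymin : ∀ z ∈ A \ E, y ≤ z) (hxy : x < y) (j : ℕ) :
    prefixCount (insert x (A.erase y)) j ≤ prefixCount E j := by
  by_cases hyj : y.val < j
  · rw [prefixCount_insert_erase hxA hyA (by have := Fin.lt_def.1 hxy; omega) hyj]
    exact hdom j
  refine card_le_card fun z hz => ?_
  obtain ⟨hz, hzj⟩ := mem_filter.1 hz
  refine mem_filter.2 ⟨?_, hzj⟩
  obtain rfl | hz := mem_insert.1 hz
  · exact hxE
  obtain ⟨hzy, hzA⟩ := mem_erase.1 hz
  by_contra hzE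
  exact (hymin z (mem_sdiff.2 ⟨hzA, hzE⟩)).not_gt (Fin.lt_def.2 (by omega))

/-- Induction on `#(A \ E)`: moving the least element of `A \ E` down to the least element of
`E \ A` keeps `A` in `F` and dominated by `E`. -/
theorem IsShifted.mem_of_forall_prefixCount_le {F : Finset (Finset (Fin n))} (hF : IsShifted F)
    {A E : Finset (Fin n)} (hA : A ∈ F) (hcard : #E = #A)
    (hdom : ∀ j, prefixCount A j ≤ prefixCount E j) : E ∈ F := by
  induction hd : #(A \ E) using Nat.strong_induction_on generalizing A with
  | _ d ih =>
  by_cases hAE : A = E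
  · exact hAE ▸ hA
  obtain ⟨x, hx, hxmin⟩ : ∃ x ∈ E \ A, ∀ z ∈ E \ A, x ≤ z :=
    have hEA := sdiff_nonempty.2 fun h => hAE (eq_of_subset_of_card_le h hcard.ge).symm
    ⟨_, min'_mem _ hEA, fun z hz => min'_le _ z hz⟩
  obtain ⟨y, hy, hymin⟩ : ∃ y ∈ A \ E, ∀ z ∈ A \ E, y ≤ z :=
    have hAE' := sdiff_nonempty.2 fun h => hAE (eq_of_subset_of_card_le h hcard.le)
    ⟨_, min'_mem _ hAE', fun z hz => min'_le _ z hz⟩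
  obtain ⟨hxE, hxA⟩ := mem_sdiff.1 hx
  obtain ⟨hyA, hyE⟩ := mem_sdiff.1 hy
  have hxy := lt_of_forall_prefixCount_le hdom hx hxmin hy
  refine ih _ ?_ (UV.compress_singleton_eq hxA hyA ▸ hF hxy A hA) ?_
    (prefixCount_insert_erase_le hdom hxE hxA hyA hymin hxy) rfl
  · calc #(insert x (A.erase y) \ E) ≤ #((A \ E).erase y) := by
          refine card_le_card fun z hz => ?_
          simp only [mem_sdiff, mem_insert, mem_erase] at hz ⊢
          obtain ⟨rfl | ⟨hzy, hzA⟩, hzE⟩ := hz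
          · exact absurd hxE hzE
          · exact ⟨hzy, hzA, hzE⟩
      _ < d := hd ▸ card_erase_lt_of_mem hy
  · rw [card_insert_of_notMem fun h => hxA (mem_of_mem_erase h), card_erase_add_one hyA, hcard]

end PrefixCount

section Staircase

variable {n : ℕ}

def IsPrefixSparse (q : ℕ) (B : Finset (Fin n)) : Prop :=
  ∀ j, 0 < j → j ≤ n → q * prefixCount B j < j

variable [NeZero n]
open Fin.NatCast

theorem IsPrefixSparse.mul_card_lt {q : ℕ} {A : Finset (Fin n)} (h : IsPrefixSparse q A) :
    q * #A < n := by
  simpa [prefixCount_of_le le_rfl] using h n (NeZero.pos n) le_rfl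

theorem IsShifted.image_range_mem {F : Finset (Finset (Fin n))} (hF : IsShifted F) {k q : ℕ}
    (hk : (F : Set (Finset (Fin n))).Sized k) {A : Finset (Fin n)} (hA : A ∈ F)
    (hAq : IsPrefixSparse q A) {p : ℕ → ℕ} (hp : p.Injective) (hpq : ∀ r, p r < q * (r + 1)) :
    (range k).image (fun r => (p r : Fin n)) ∈ F := by
  have hAk : #A = k := hk hA
  have hqk : q * k < n := hAk ▸ hAq.mul_card_lt
  have hpn : ∀ r < k, p r < n := fun r hr =>
    (hpq r).trans_le ((Nat.mul_le_mul_left q hr).trans hqk.le)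
  have hinj : ∀ c ≤ k, Set.InjOn (fun r => (p r : Fin n)) (range c) := by
    intro c hc r hr r' hr' h
    have := congrArg Fin.val h
    rw [coe_range, Set.mem_Iio] at hr hr'
    rw [Fin.val_cast_of_lt (hpn r (by omega)), Fin.val_cast_of_lt (hpn r' (by omega))] at this
    exact hp this
  have hck : ∀ j, prefixCount A j ≤ k := fun j => hAk ▸ card_le_card (filter_subset _ _)
  refine hF.mem_of_forall_prefixCount_le hA ?_ fun j => ?_
  · rw [card_image_of_injOn (hinj k le_rfl), card_range, hAk]
  have hlt : ∀ r < prefixCount A j, p r < j := by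
    intro r hr
    rcases le_or_gt j n with hjn | hjn
    · have hj : 0 < j := Nat.pos_of_ne_zero (by rintro rfl; simp [prefixCount] at hr)
      exact (hpq r).trans_le ((Nat.mul_le_mul_left q hr).trans (hAq j hj hjn).le)
    · exact (hpn r ((hr.trans_le (hck j)))).trans hjn
  calc prefixCount A j = #((range (prefixCount A j)).image fun r => (p r : Fin n)) := by
        rw [card_image_of_injOn (hinj _ (hck j)), card_range]
    _ ≤ prefixCount (.image (fun r => (p r : Fin n)) (range k)) j := by
        refine card_le_card fun x hx => ?_
        obtain ⟨r, hr, rfl⟩ := mem_image.1 hx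
        rw [mem_range] at hr
        have hrk : r < k := hr.trans_le (hck j)
        refine mem_filter.2 ⟨mem_image.2 ⟨r, mem_range.2 hrk, rfl⟩, ?_⟩
        rw [Fin.val_cast_of_lt (hpn r hrk)]
        exact hlt r hr

end Staircase

section CycleLemma

variable {n : ℕ} {w : ℕ → ℤ}

theorem Function.Periodic.sum_range_mul_add (hw : w.Periodic n) (r j : ℕ) :
    ∑ x ∈ range (r * n + j), w x = r * ∑ x ∈ range n, w x + ∑ x ∈ range j, w x := by
  induction r with
  | zero => simp
  | succ r ih =>
    rw [show (r + 1) * n + j = n + (r * n + j) by ring, sum_range_add]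
    have hw' : ∀ x, w (n + x) = w x := fun x => by rw [add_comm, hw x]
    simp only [hw', ih]
    push_cast
    ring

theorem sum_range_add_le_of_le_one (hw1 : ∀ x, w x ≤ 1) (i l : ℕ) :
    ∑ x ∈ range (i + l), w x ≤ ∑ x ∈ range i, w x + l := by
  rw [sum_range_add]
  gcongr
  simpa using sum_le_card_nsmul (range l) (fun x => w (i + x)) 1 fun x _ => hw1 _

/-- The walk `j ↦ ∑ x < j, w x` has positive drift per period, so it eventually stays above any
level `v ≥ 0`; as it climbs by at most one per step, its last visit to `≤ v` is at height
exactly `v`. -/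
theorem exists_sum_range_eq_forall_lt (hn : 0 < n) (hw : w.Periodic n) (hw1 : ∀ x, w x ≤ 1)
    (ht : 0 < ∑ x ∈ range n, w x) {v : ℤ} (hv : 0 ≤ v) :
    ∃ c, ∑ x ∈ range c, w x = v ∧ ∀ j, 0 < j → v < ∑ x ∈ range (c + j), w x := by
  have hgrowth : ∃ N, ∀ j ≥ N, v < ∑ x ∈ range j, w x := by
    refine ⟨n * (v.toNat + n), fun j hj => ?_⟩
    have hq : v.toNat + n ≤ j / n := (Nat.le_div_iff_mul_le hn).2 (by rwa [mul_comm])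
    have hlow := sum_range_add_le_of_le_one hw1 (j % n) (n - j % n)
    rw [Nat.add_sub_cancel' (Nat.mod_lt j hn).le] at hlow
    have hdecomp := hw.sum_range_mul_add (j / n) (j % n)
    rw [Nat.div_add_mod'] at hdecomp
    have hq' : (v.toNat : ℤ) + n ≤ (j / n : ℕ) := by exact_mod_cast hq
    have hmn : ((n - j % n : ℕ) : ℤ) ≤ n := by exact_mod_cast Nat.sub_le n (j % n)
    have hdt : ((j / n : ℕ) : ℤ) ≤ (j / n : ℕ) * ∑ x ∈ range n, w x :=
      le_mul_of_one_le_right (Nat.cast_nonneg _) ht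
    linarith [Int.self_le_toNat v]
  classical
  set N := Nat.find hgrowth
  have hN : ∀ j ≥ N, v < ∑ x ∈ range j, w x := Nat.find_spec hgrowth
  have hN0 : N ≠ 0 := fun h => by
    have := hN 0 h.le
    rw [sum_range_zero] at this
    exact this.not_ge hv
  refine ⟨N - 1, le_antisymm (not_lt.1 fun hlt => Nat.find_min hgrowth (Nat.sub_one_lt hN0) ?_) ?_,
    fun j hj => hN _ (by omega)⟩
  · intro j hj
    obtain rfl | hj := hj.eq_or_lt
    · exact hlt
    · exact hN j (by omega)
  · have hstep := sum_range_add_le_of_le_one hw1 (N - 1) 1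
    rw [Nat.sub_add_cancel (Nat.one_le_iff_ne_zero.2 hN0), Nat.cast_one] at hstep
    linarith [hN N le_rfl]

open Classical in
theorem cycle_lemma (hn : 0 < n) (hw : w.Periodic n) (hw1 : ∀ x, w x ≤ 1) :
    ∑ x ∈ range n, w x ≤ #{c ∈ range n | ∀ j, 0 < j → 0 < ∑ y ∈ range j, w (c + y)} := by
  set t := ∑ x ∈ range n, w x
  rcases le_or_gt t 0 with ht | ht
  · exact ht.trans (Nat.cast_nonneg _)
  choose c hc hlast using fun v : ℕ =>
    exists_sum_range_eq_forall_lt hn hw hw1 ht (Nat.cast_nonneg v)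
  have hdecomp : ∀ x, ∑ y ∈ range x, w y = (x / n : ℕ) * t + ∑ y ∈ range (x % n), w y :=
    fun x => by rw [← hw.sum_range_mul_add, Nat.div_add_mod']
  have hmaps : ∀ v ∈ range t.toNat,
      c v % n ∈ {c ∈ range n | ∀ j, 0 < j → 0 < ∑ y ∈ range j, w (c + y)} := by
    intro v _
    refine mem_filter.2 ⟨mem_range.2 (Nat.mod_lt _ hn), fun j hj => ?_⟩
    have hshift := hw.sum_range_mul_add (c v / n) (c v % n + j)
    rw [← add_assoc, Nat.div_add_mod', sum_range_add w (c v % n) j] at hshift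
    linarith [hdecomp (c v), hc v, hlast v j hj]
  have hinj : Set.InjOn (fun v => c v % n) (range t.toNat) := by
    intro v hv v' hv' h
    simp only [coe_range, Set.mem_Iio] at hv hv' h
    have hv_eq := hdecomp (c v)
    rw [h, hc] at hv_eq
    have hdvd : t ∣ (v : ℤ) - v' :=
      ⟨(c v / n : ℕ) - (c v' / n : ℕ), by linarith [hdecomp (c v'), hc v']⟩
    have := Int.eq_zero_of_abs_lt_dvd hdvd (abs_lt.2 ⟨by omega, by omega⟩)
    omega
  calc t = (t.toNat : ℤ) := (Int.toNat_of_nonneg ht.le).symm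
    _ = #(range t.toNat) := by rw [card_range]
    _ ≤ _ := by exact_mod_cast card_le_card_of_injOn _ hmaps hinj

end CycleLemma

section SparseSets

variable {n : ℕ} [NeZero n]
open Fin.NatCast

theorem prefixCount_eq_card_filter_range (B : Finset (Fin n)) {j : ℕ} (hj : j ≤ n) :
    prefixCount B j = #{y ∈ range j | ((y : ℕ) : Fin n) ∈ B} := by
  refine card_nbij' Fin.val (fun y : ℕ => (y : Fin n)) (fun x hx => ?_) (fun y hy => ?_)
    (fun x _ => Fin.cast_val_eq_self x) (fun y hy => ?_)
  · obtain ⟨hxB, hxj⟩ := mem_filter.1 hx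
    exact mem_filter.2 ⟨mem_range.2 hxj, by rwa [Fin.cast_val_eq_self]⟩
  · obtain ⟨hyj, hyB⟩ := mem_filter.1 hy
    refine mem_filter.2 ⟨hyB, ?_⟩
    rw [Fin.val_cast_of_lt ((mem_range.1 hyj).trans_le hj)]
    exact mem_range.1 hyj
  · exact Fin.val_cast_of_lt ((mem_range.1 (mem_filter.1 hy).1).trans_le hj)

theorem sum_range_sub_mul_ite_eq (q c : ℕ) (A : Finset (Fin n)) {j : ℕ} (hj : j ≤ n) :
    ∑ y ∈ range j, (1 - q * if ((c + y : ℕ) : Fin n) ∈ A then 1 else 0 : ℤ) =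
      j - q * prefixCount (A.map (Equiv.addRight (c : Fin n)).symm.toEmbedding) j := by
  rw [prefixCount_eq_card_filter_range _ hj, sum_sub_distrib, ← mul_sum, sum_boole]
  simp only [sum_const, card_range, nsmul_eq_mul, mul_one, mem_map_equiv, Equiv.symm_symm,
    Equiv.coe_addRight, Nat.cast_add, add_comm (c : Fin n)]

open Classical in
theorem le_card_filter_isPrefixSparse_rotate (q : ℕ) (A : Finset (Fin n)) :
    (n : ℤ) - q * #A ≤
      #{c ∈ range n |
        IsPrefixSparse q (A.map (Equiv.addRight ((c : ℕ) : Fin n)).symm.toEmbedding)} := by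
  set w : ℕ → ℤ := fun x => 1 - q * if (x : Fin n) ∈ A then 1 else 0
  have hw : w.Periodic n := fun x => by simp [w]
  have hw1 : ∀ x, w x ≤ 1 := fun x => by
    simp only [w]
    split_ifs <;> simp
  have htotal : ∑ x ∈ range n, w x = n - q * #A := by
    have h := sum_range_sub_mul_ite_eq q 0 A le_rfl
    simp only [zero_add] at h
    rw [show ∑ x ∈ range n, w x = _ from h, prefixCount_of_le le_rfl, card_map]
  rw [← htotal]
  refine (cycle_lemma (NeZero.pos n) hw hw1).trans
    (Nat.cast_le.2 (card_le_card (monotone_filter_right _ fun c _ hc j hj hjn => ?_)))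
  have h := hc j hj
  rw [show ∑ y ∈ range j, w (c + y) = _ from sum_range_sub_mul_ite_eq q c A hjn] at h
  exact_mod_cast sub_pos.1 h

open Classical in
/-- Double counting of pairs (`k`-set, rotation) with sparse rotated set: every rotation permutes
the `k`-sets. -/
theorem le_card_filter_isPrefixSparse (q k : ℕ) :
    ((n : ℤ) - q * k) * n.choose k ≤
      n * #{B ∈ powersetCard k (univ : Finset (Fin n)) | IsPrefixSparse q B} := by
  set K := powersetCard k (univ : Finset (Fin n))
  set rot : ℕ → Finset (Fin n) → Finset (Fin n) :=
    fun c A => A.map (Equiv.addRight (c : Fin n)).symm.toEmbedding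
  have hrot : ∀ c, #{A ∈ K | IsPrefixSparse q (rot c A)} = #{B ∈ K | IsPrefixSparse q B} :=
    fun c => card_equiv (Equiv.addRight (c : Fin n)).symm.finsetCongr fun A => by
      simp [K, rot, Equiv.finsetCongr_apply]
  calc ((n : ℤ) - q * k) * n.choose k = ∑ A ∈ K, ((n : ℤ) - q * #A) := by
        rw [sum_congr rfl fun A hA => by rw [mem_powersetCard_univ.1 hA], sum_const,
          card_powersetCard, card_univ, Fintype.card_fin, nsmul_eq_mul, mul_comm]
    _ ≤ ∑ A ∈ K, (#{c ∈ range n | IsPrefixSparse q (rot c A)} : ℤ) :=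
        sum_le_sum fun A _ => le_card_filter_isPrefixSparse_rotate q A
    _ = ∑ c ∈ range n, (#{A ∈ K | IsPrefixSparse q (rot c A)} : ℤ) := by
        simp only [card_filter]
        push_cast
        exact sum_comm
    _ = n * #{B ∈ K | IsPrefixSparse q B} := by simp [hrot]

theorem exists_mem_isPrefixSparse {F : Finset (Finset (Fin n))} {q k : ℕ}
    (hF : (F : Set (Finset (Fin n))).Sized k) (hdense : q * k * n.choose k < #F * n) :
    ∃ A ∈ F, IsPrefixSparse q A := by
  classical
  by_contra! h
  set G := {B ∈ powersetCard k (univ : Finset (Fin n)) | IsPrefixSparse q B}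
  have hFG : #F + #G ≤ n.choose k := by
    rw [← card_union_of_disjoint (disjoint_left.2 fun A hA hAG => h A hA (mem_filter.1 hAG).2)]
    calc #(F ∪ G) ≤ #(powersetCard k (univ : Finset (Fin n))) :=
          card_le_card (union_subset (fun A hA => mem_powersetCard_univ.2 (hF hA))
            (filter_subset _ _))
      _ = n.choose k := by simp
  have hG := le_card_filter_isPrefixSparse (n := n) q k
  have hFGn : ((#F + #G : ℕ) : ℤ) * n ≤ n.choose k * n := by
    exact_mod_cast Nat.mul_le_mul_right n hFG
  have hd : ((q * k * n.choose k : ℕ) : ℤ) < (#F * n : ℕ) := by exact_mod_cast hdense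
  push_cast at hFGn hd
  nlinarith

end SparseSets

section Positions

/-- The density thresholds `2 k m / n` and `2 k s / n` of the statement are
`stride m s i * k / n`. -/
def stride (m s i : ℕ) : ℕ := if i < m then 2 * m else 2 * s

def position (m s i r : ℕ) : ℕ :=
  if i < m then 2 * (i + m * r) else 2 * (i - m + (s - m) * r) + 1

variable {m s i i' r r' : ℕ}

theorem position_lt_stride_mul (hi : i < s) (r : ℕ) :
    position m s i r < stride m s i * (r + 1) := by
  unfold position stride
  split_ifs with him
  · nlinarith
  · have h1 : i - m + (s - m) * r < (s - m) * (r + 1) := by rw [mul_add_one]; omega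
    have h2 : (s - m) * (r + 1) ≤ s * (r + 1) := Nat.mul_le_mul_right _ (Nat.sub_le s m)
    rw [mul_assoc]
    omega

theorem Nat.eq_and_eq_of_add_mul_eq {a a' d : ℕ} (ha : a < d) (ha' : a' < d)
    (h : a + d * r = a' + d * r') : a = a' ∧ r = r' := by
  have hd : 0 < d := ha.pos
  obtain ⟨h1, h2⟩ := (Nat.div_mod_unique hd).2 ⟨h, ha⟩
  obtain ⟨h1', h2'⟩ := (Nat.div_mod_unique hd).2 ⟨rfl, ha'⟩
  exact ⟨h2.symm.trans h2', h1.symm.trans h1'⟩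

theorem position_injective (hi : i < s) (hi' : i' < s)
    (h : position m s i r = position m s i' r') : i = i' ∧ r = r' := by
  unfold position at h
  split_ifs at h with h1 h2 h2
  · exact Nat.eq_and_eq_of_add_mul_eq h1 h2 (by omega)
  · omega
  · omega
  · have := Nat.eq_and_eq_of_add_mul_eq (d := s - m) (a := i - m) (a' := i' - m) (r := r)
      (r' := r') (by omega) (by omega) (by omega)
    omega

end Positions

section Matching

variable {n : ℕ} [NeZero n]
open Fin.NatCast

theorem hasCrossMatching_of_isPrefixSparse {s m : ℕ} {k : Fin s → ℕ}
    {G : Fin s → Finset (Finset (Fin n))} (hG : ∀ i, IsShifted (G i))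
    (hk : ∀ i, (G i : Set (Finset (Fin n))).Sized (k i))
    (hsparse : ∀ i, ∃ A ∈ G i, IsPrefixSparse (stride m s i) A) : HasCrossMatching G := by
  choose A hA hAs using hsparse
  have hpos : ∀ i, ∀ r < k i, position m s i r < n := fun i r hr =>
    (position_lt_stride_mul i.isLt r).trans_le
      ((Nat.mul_le_mul_left _ hr).trans (hk i (hA i) ▸ (hAs i).mul_card_lt).le)
  refine ⟨fun i => (range (k i)).image fun r => (position m s i r : Fin n),
    fun i => (hG i).image_range_mem (hk i) (hA i) (hAs i)
      (fun r r' h => (position_injective i.isLt i.isLt h).2) (position_lt_stride_mul i.isLt),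
    fun i i' hii' => disjoint_left.2 fun x hx hx' => hii' ?_⟩
  obtain ⟨r, hr, rfl⟩ := mem_image.1 hx
  obtain ⟨r', hr', h⟩ := mem_image.1 hx'
  have h := congrArg Fin.val h
  rw [Fin.val_cast_of_lt (hpos i' r' (mem_range.1 hr')),
    Fin.val_cast_of_lt (hpos i r (mem_range.1 hr))] at h
  exact Fin.ext (position_injective i.isLt i'.isLt h.symm).1

end Matching

theorem pos_of_div_lt_div {a N C n : ℕ} (h : (a : ℝ) / n < N / C) : 0 < N := by
  refine Nat.pos_of_ne_zero fun hN => ?_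
  rw [hN, Nat.cast_zero, zero_div] at h
  exact h.not_ge (by positivity)

theorem mul_lt_mul_of_div_lt_div {a N C n : ℕ} (hn : 0 < n) (h : (a : ℝ) / n < N / C) :
    a * C < N * n := by
  rcases Nat.eq_zero_or_pos C with rfl | hC
  · simp only [Nat.cast_zero, div_zero] at h
    exact absurd h (not_lt.2 (by positivity))
  rw [div_lt_div_iff₀ (by exact_mod_cast hn) (by exact_mod_cast hC)] at h
  exact_mod_cast h

theorem stmt18_general {n s : ℕ} (m : ℕ)
    (k : Fin s → ℕ)
    (𝓕 : Fin s → Finset (Finset (Fin n)))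
    (hunif : ∀ i, ∀ A ∈ 𝓕 i, A.card = k i)
    (hdense1 : ∀ i : Fin s, (i : ℕ) < m →
      (2 : ℝ) * k i * m / n < ((𝓕 i).card : ℝ) / (n.choose (k i)))
    (hdense2 : ∀ i : Fin s, m ≤ (i : ℕ) →
      (2 : ℝ) * k i * s / n < ((𝓕 i).card : ℝ) / (n.choose (k i))) :
    ∃ A : Fin s → Finset (Fin n), (∀ i, A i ∈ 𝓕 i) ∧
      ∀ i j, i ≠ j → Disjoint (A i) (A j) := by
  suffices HasCrossMatching 𝓕 by
    obtain ⟨A, hA, hdisj⟩ := this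
    exact ⟨A, hA, fun i j hij => hdisj hij⟩
  have hdense : ∀ i : Fin s, ((stride m s i * k i : ℕ) : ℝ) / n < #(𝓕 i) / n.choose (k i) := by
    intro i
    unfold stride
    split_ifs with hi
    · convert hdense1 i hi using 2
      push_cast
      ring
    · convert hdense2 i (not_lt.1 hi) using 2
      push_cast
      ring
  rcases Nat.eq_zero_or_pos n with rfl | hn
  · exact .of_isEmpty fun i => card_pos.1 (pos_of_div_lt_div (hdense i))
  have : NeZero n := ⟨hn.ne'⟩
  refine hasCrossMatching_of_isShifted
    (fun G => ∀ i, (G i : Set (Finset (Fin n))).Sized (k i) ∧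
      stride m s i * k i * n.choose (k i) < #(G i) * n)
    (fun G a b _ hG i =>
      ⟨(hG i).1.uvCompression (by simp), by rw [UV.card_compression]; exact (hG i).2⟩)
    (fun G hG hsh => hasCrossMatching_of_isPrefixSparse hsh (fun i => (hG i).1)
      fun i => exists_mem_isPrefixSparse (hG i).1 (hG i).2)
    𝓕 fun i => ⟨fun A hA => hunif i A hA, mul_lt_mul_of_div_lt_div hn (hdense i)⟩

theorem stmt18 {n s : ℕ} (m : ℕ) (hm1 : 1 ≤ m) (hms : m ≤ s)
    (k : Fin s → ℕ) (hn : ∑ i, k i ≤ n)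
    (𝓕 : Fin s → Finset (Finset (Fin n)))
    (hunif : ∀ i, ∀ A ∈ 𝓕 i, A.card = k i)
    (hdense1 : ∀ i : Fin s, (i : ℕ) < m →
      (2 : ℝ) * k i * m / n < ((𝓕 i).card : ℝ) / (n.choose (k i)))
    (hdense2 : ∀ i : Fin s, m ≤ (i : ℕ) →
      (2 : ℝ) * k i * s / n < ((𝓕 i).card : ℝ) / (n.choose (k i))) :
    ∃ A : Fin s → Finset (Fin n), (∀ i, A i ∈ 𝓕 i) ∧
      ∀ i j, i ≠ j → Disjoint (A i) (A j) :=
  stmt18_general m k 𝓕 hunif hdense1 hdense2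
end
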